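/- arXiv:1205.5402 — 8 statements merged into one kernel-verified Lean document; each statement's English description precedes it below -/
import Mathlib

section
/- For real b, c with d = b^2 - 4c > 0, T_n(b,c) = d^(n/2) * L_n(b/\sqrt{d}), where L_n is the n-th Legendre polynomial. -/
/-!
Write `x² + b x + c = (x + r)(x + s)` with `r, s = (b ± √d) / 2`. Expanding both factors
binomially, `T_n = ∑ₖ C(n,k)² rⁿ⁻ᵏ sᵏ`. Applying the Leibniz rule to
`(x² - 1)ⁿ = (x - 1)ⁿ (x + 1)ⁿ` in Rodrigues' formula gives
`Lₙ(x) = 2⁻ⁿ ∑ₖ C(n,k)² (x + 1)ⁿ⁻ᵏ (x - 1)ᵏ`, and homogenising this with `x = b / √d` turns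
`(√d (x ± 1)) / 2` into `r` and `s`.
-/

open Filter Polynomial Real Finset

noncomputable def T (n : ℕ) (b c : ℝ) : ℝ :=
  ((X ^ 2 + C b * X + C c) ^ n).coeff n

noncomputable def legendre (n : ℕ) : Polynomial ℝ :=
  (1 / (2 ^ n * (n.factorial : ℝ))) • (Polynomial.derivative^[n] ((X ^ 2 - 1) ^ n))

theorem Polynomial.coeff_X_add_C_mul_X_add_C_pow_self {R : Type*} [CommSemiring R] (r s : R)
    (n : ℕ) :
    (((X + C r) * (X + C s)) ^ n).coeff n =
      ∑ k ∈ range (n + 1), (n.choose k : R) ^ 2 * r ^ (n - k) * s ^ k := by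
  rw [mul_pow, coeff_mul, Nat.sum_antidiagonal_eq_sum_range_succ_mk]
  refine sum_congr rfl fun k hk => ?_
  have hkn : k ≤ n := Nat.lt_succ_iff.mp (mem_range.mp hk)
  rw [coeff_X_add_C_pow, coeff_X_add_C_pow, Nat.choose_symm hkn, Nat.sub_sub_self hkn]
  ring

theorem Nat.descFactorial_sub_mul_descFactorial {n k : ℕ} (hkn : k ≤ n) :
    n.descFactorial (n - k) * n.descFactorial k = n.factorial * n.choose k := by
  rw [Nat.descFactorial_eq_factorial_mul_choose, Nat.descFactorial_eq_factorial_mul_choose,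
    Nat.choose_symm hkn, ← Nat.choose_mul_factorial_mul_factorial hkn]
  ring

theorem Polynomial.iterate_derivative_X_sq_sub_one_pow {R : Type*} [CommRing R] (n : ℕ) :
    derivative^[n] (((X : R[X]) ^ 2 - 1) ^ n) =
      n.factorial •
        ∑ k ∈ range (n + 1), (n.choose k ^ 2) • ((X + 1) ^ (n - k) * (X - 1) ^ k) := by
  have hfac : ((X : R[X]) ^ 2 - 1) ^ n = (X - C 1) ^ n * (X + C 1) ^ n := by
    rw [← mul_pow, C_1]; ring
  rw [hfac, iterate_derivative_mul, smul_sum]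
  refine sum_congr rfl fun k hk => ?_
  have hkn : k ≤ n := Nat.lt_succ_iff.mp (mem_range.mp hk)
  rw [iterate_derivative_X_sub_pow, iterate_derivative_X_add_pow, Nat.sub_sub_self hkn, C_1,
    smul_mul_smul_comm, Nat.descFactorial_sub_mul_descFactorial hkn, smul_smul, smul_smul]
  ring_nf

theorem eval_legendre (n : ℕ) (x : ℝ) :
    (legendre n).eval x =
      (2 ^ n)⁻¹ *
        ∑ k ∈ range (n + 1), (n.choose k : ℝ) ^ 2 * (x + 1) ^ (n - k) * (x - 1) ^ k := by
  have hfact : (n.factorial : ℝ) ≠ 0 := Nat.cast_ne_zero.mpr n.factorial_ne_zero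
  simp only [legendre, iterate_derivative_X_sq_sub_one_pow, eval_smul, eval_finsetSum,
    nsmul_eq_mul, eval_natCast, eval_mul, eval_pow, eval_add, eval_sub, eval_X, eval_one,
    smul_eq_mul]
  push_cast
  field_simp

theorem pow_mul_eval_legendre (n : ℕ) (t x : ℝ) :
    t ^ n * (legendre n).eval x =
      ∑ k ∈ range (n + 1),
        (n.choose k : ℝ) ^ 2 * ((t * x + t) / 2) ^ (n - k) * ((t * x - t) / 2) ^ k := by
  rw [eval_legendre, ← mul_assoc, ← div_eq_mul_inv, ← div_pow, mul_sum]
  refine sum_congr rfl fun k hk => ?_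
  rw [← pow_sub_mul_pow (t / 2) (Nat.lt_succ_iff.mp (mem_range.mp hk)),
    show (t * x + t) / 2 = t / 2 * (x + 1) by ring, show (t * x - t) / 2 = t / 2 * (x - 1) by ring,
    mul_pow, mul_pow]
  ring

theorem stmt_3 (b c : ℝ) (hd : b ^ 2 - 4 * c > 0) (n : ℕ) :
    T n b c = (b ^ 2 - 4 * c) ^ ((n : ℝ) / 2) *
      (legendre n).eval (b / Real.sqrt (b ^ 2 - 4 * c)) := by
  set t := √(b ^ 2 - 4 * c)
  have ht : t ≠ 0 := (Real.sqrt_pos.mpr hd).ne'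
  have hfac : (X ^ 2 + C b * X + C c : ℝ[X]) = (X + C ((b + t) / 2)) * (X + C ((b - t) / 2)) := by
    have ht2 : t ^ 2 = b ^ 2 - 4 * c := Real.sq_sqrt hd.le
    have hb : C b = C ((b + t) / 2) + C ((b - t) / 2) := by rw [← C_add]; congr 1; ring
    have hc : C c = C ((b + t) / 2) * C ((b - t) / 2) := by
      rw [← C_mul]; congr 1; linear_combination (1 / 4 : ℝ) * ht2
    rw [hb, hc]
    ring
  rw [rpow_div_two_eq_sqrt _ hd.le, rpow_natCast, pow_mul_eval_legendre, mul_div_cancel₀ b ht,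
    T, hfac, coeff_X_add_C_mul_X_add_C_pow_self]
end

section
/- The ordinary generating function of the sequence T_n(b,c) satisfies \sum_{n\ge 0} T_n(b,c) t^n = (1 - 2bt + (b^2-4c) t^2)^{-1/2} for all real b, c and all real t in a neighbourhood of 0 (with |t| small enough that 1 - 2bt + (b^2-4c)t^2 > 0). -/
/-!
Put `z = 2 b t - (b ^ 2 - 4 c) t ^ 2`, so that the right-hand side is `(1 - z) ^ (-1/2)`, the
binomial series `∑ C(2n, n) / 4 ^ n * z ^ n` (convergent for `|z| < 1`). Expanding each `z ^ n`
by the binomial theorem gives a double series over `(i, j)` in the monomials `t ^ (i + 2 j)`,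
which converges absolutely once `|2 b t| + |(b ^ 2 - 4 c) t ^ 2| < 1`. Collecting the terms with
`i + 2 j = m` yields `T m b c * t ^ m`, by the coefficient formula that comes from completing
the square `x ^ 2 + b x + c = (x + b/2) ^ 2 + (c - b ^ 2 / 4)`.
-/

open Filter Polynomial Real

open Finset

theorem Ring.choose_neg_half {K : Type*} [Field K] [CharZero K] (n : ℕ) :
    Ring.choose (-(1 / 2) : K) n = (-1 / 4) ^ n * n.centralBinom := by
  induction n with
  | zero => simp
  | succ n ih =>
    have hrec := Ring.choose_smul_choose (-(1 / 2) : K) (Nat.le_add_right n 1)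
    rw [Nat.choose_succ_self_right, Nat.add_sub_cancel_left, Ring.choose_one_right, ih,
      nsmul_eq_mul] at hrec
    have hc : ((n : K) + 1) * (n + 1).centralBinom = 2 * (2 * n + 1) * n.centralBinom := by
      exact_mod_cast Nat.succ_mul_centralBinom_succ n
    apply mul_left_cancel₀ (show (n : K) + 1 ≠ 0 by exact_mod_cast n.succ_ne_zero)
    push_cast at hrec
    rw [hrec, pow_succ]
    linear_combination (-1 / 4 : K) ^ n / 4 * hc

theorem hasSum_centralBinom_mul_pow {z : ℝ} (hz : |z| < 1) :
    HasSum (fun n ↦ (n.centralBinom / 4 ^ n : ℝ) * z ^ n) (√(1 - z))⁻¹ := by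
  have h := (Real.one_add_rpow_hasFPowerSeriesOnBall_zero (a := -(1 / 2))).hasSum
    (y := -z) (by simpa [enorm_eq_nnnorm, ← NNReal.coe_lt_one] using hz)
  simp only [binomialSeries, FormalMultilinearSeries.ofScalars_apply_eq, Ring.choose_neg_half,
    smul_eq_mul] at h
  rw [zero_add, ← sub_eq_add_neg] at h
  rw [Real.sqrt_eq_rpow, ← Real.rpow_neg (by linarith [le_abs_self z])]
  refine h.congr_fun fun n ↦ ?_
  have hsign : ((-1 : ℝ) / 4) ^ n * (-1) ^ n = (4 ^ n)⁻¹ := by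
    rw [← mul_pow, ← inv_pow]; norm_num
  rw [neg_pow z]
  linear_combination -(n.centralBinom * z ^ n : ℝ) * hsign

theorem HasSum.sum_finset_fiberwise {α β γ : Type*} [AddCommGroup α] [UniformSpace α]
    [IsUniformAddGroup α] [CompleteSpace α] [T2Space α] {f : β → α} {a : α} (hf : HasSum f a)
    (g : β → γ) (S : γ → Finset β) (hS : ∀ b c, b ∈ S c ↔ g b = c) :
    HasSum (fun c ↦ ∑ b ∈ S c, f b) a := by
  refine (hf.tsum_fiberwise g).congr_fun fun c ↦ ?_
  rw [← Finset.tsum_subtype]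
  exact tsum_congr_set_coe f (Set.ext fun b ↦ hS b c)

section Fiberwise

variable {α : Type*} [AddCommGroup α] [UniformSpace α] [IsUniformAddGroup α] [CompleteSpace α]
  [T2Space α] {f : ℕ × ℕ → α} {a : α}

theorem HasSum.sum_antidiagonal (hf : HasSum f a) :
    HasSum (fun n ↦ ∑ p ∈ antidiagonal n, f p) a :=
  hf.sum_finset_fiberwise (fun p ↦ p.1 + p.2) _ fun _ _ ↦ mem_antidiagonal

theorem HasSum.sum_range_add_two_mul (hf : HasSum f a) :
    HasSum (fun m ↦ ∑ j ∈ range (m / 2 + 1), f (m - 2 * j, j)) a := by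
  have hinj (m : ℕ) : Set.InjOn (fun j ↦ (m - 2 * j, j)) (range (m / 2 + 1)) :=
    fun _ _ _ _ h ↦ (Prod.ext_iff.1 h).2
  refine (hf.sum_finset_fiberwise (fun p ↦ p.1 + 2 * p.2)
    (fun m ↦ (range (m / 2 + 1)).image fun j ↦ (m - 2 * j, j)) ?_).congr_fun fun m ↦ ?_
  · rintro ⟨i, j⟩ m
    simp only [mem_image, mem_range, Prod.mk.injEq]
    constructor
    · rintro ⟨j, hj, rfl, rfl⟩; omega
    · rintro rfl; exact ⟨j, by omega, by omega, rfl⟩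
  · exact (sum_image (hinj m)).symm

end Fiberwise

def binomTerm {R : Type*} [CommSemiring R] (a : ℕ → R) (x y : R) (p : ℕ × ℕ) : R :=
  a (p.1 + p.2) * (p.1 + p.2).choose p.1 * x ^ p.1 * y ^ p.2

theorem sum_antidiagonal_binomTerm {R : Type*} [CommSemiring R] (a : ℕ → R) (x y : R) (n : ℕ) :
    ∑ p ∈ antidiagonal n, binomTerm a x y p = a n * (x + y) ^ n := by
  rw [(Commute.all x y).add_pow', mul_sum]
  refine sum_congr rfl fun p hp ↦ ?_
  rw [binomTerm, mem_antidiagonal.1 hp, nsmul_eq_mul]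
  ring

-- The antidiagonal sums of `|binomTerm a x y|` are `|a n| * (|x| + |y|) ^ n`.
theorem summable_binomTerm {a : ℕ → ℝ} {x y : ℝ}
    (h : Summable fun n ↦ |a n| * (|x| + |y|) ^ n) : Summable (binomTerm a x y) := by
  have hG : Summable (binomTerm (|a ·|) |x| |y|) := by
    rw [← (HasAntidiagonal.sigmaAntidiagonalEquivProd (A := ℕ)).summable_iff,
      summable_sigma_of_nonneg fun _ ↦ by simp only [Function.comp_apply, binomTerm]; positivity]
    refine ⟨fun _ ↦ .of_finite, h.congr fun n ↦ ?_⟩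
    rw [← sum_antidiagonal_binomTerm (|a ·|)]
    exact (Finset.tsum_subtype (antidiagonal n) _).symm
  refine .of_norm (hG.congr fun p ↦ ?_)
  simp only [binomTerm, norm_mul, norm_pow, Real.norm_eq_abs, Nat.abs_cast]

theorem hasSum_binomTerm {a : ℕ → ℝ} {x y s : ℝ} (hs : HasSum (fun n ↦ a n * (x + y) ^ n) s)
    (habs : Summable fun n ↦ |a n| * (|x| + |y|) ^ n) : HasSum (binomTerm a x y) s := by
  have hF := (summable_binomTerm habs).hasSum
  convert hF
  refine hs.unique ?_
  simpa only [sum_antidiagonal_binomTerm] using hF.sum_antidiagonal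

theorem Nat.choose_add_mul_choose_eq_centralBinom_mul (k j : ℕ) :
    (2 * k).choose (k + j) * (k + j).choose j = k.centralBinom * k.choose j := by
  rcases le_or_gt j k with hjk | hkj
  · rw [Nat.choose_mul (by omega), Nat.centralBinom, Nat.choose_mul hjk, Nat.add_sub_cancel,
      Nat.choose_symm_of_eq_add (by omega : 2 * k - j = k + (k - j))]
  · rw [Nat.choose_eq_zero_of_lt (by omega : 2 * k < k + j), Nat.choose_eq_zero_of_lt hkj,
      zero_mul, mul_zero]

theorem T_eq_sum_centralBinom (m : ℕ) (b c : ℝ) :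
    T m b c = ∑ j ∈ range (m / 2 + 1),
      ((m - j).centralBinom * (m - j).choose j : ℝ) * (b / 2) ^ (m - 2 * j) *
        (c - (b / 2) ^ 2) ^ j := by
  set d := c - (b / 2) ^ 2
  have hsq : (X ^ 2 + C b * X + C c : ℝ[X]) = C d + (X + C (b / 2)) ^ 2 := by
    have hb : (C b : ℝ[X]) = C (b / 2) + C (b / 2) := by rw [← C_add, add_halves]
    rw [hb, C_sub, C_pow]
    ring
  have hcoeff (j : ℕ) : ((C d ^ j * ((X + C (b / 2)) ^ 2) ^ (m - j) * (m.choose j : ℝ[X]))).coeff m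
      = d ^ j * ((b / 2) ^ (2 * (m - j) - m) * (2 * (m - j)).choose m) * m.choose j := by
    rw [← C_pow, ← pow_mul, ← C_eq_natCast, coeff_mul_C, coeff_C_mul, coeff_X_add_C_pow]
  rw [T, hsq, add_pow, finsetSum_coeff]
  simp only [hcoeff]
  rw [← sum_subset (range_subset_range.2 (by omega : m / 2 + 1 ≤ m + 1))]
  · refine sum_congr rfl fun j hj ↦ ?_
    obtain ⟨k, rfl⟩ : ∃ k, m = k + j + j := ⟨m - 2 * j, by simp at hj; omega⟩
    have hchoose : ((2 * (k + j)).choose (k + j + j) * (k + j + j).choose j : ℝ)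
        = (k + j).centralBinom * (k + j).choose j := by
      exact_mod_cast Nat.choose_add_mul_choose_eq_centralBinom_mul (k + j) j
    rw [show 2 * (k + j + j - j) = 2 * (k + j) by omega, show k + j + j - j = k + j by omega,
      show 2 * (k + j) - (k + j + j) = k by omega, show k + j + j - 2 * j = k by omega]
    linear_combination d ^ j * (b / 2) ^ k * hchoose
  · intro j hjm hj
    simp only [mem_range] at hjm hj
    rw [Nat.choose_eq_zero_of_lt (by omega : 2 * (m - j) < m)]
    simp

theorem T_mul_pow_eq_sum_binomTerm (b c t : ℝ) (m : ℕ) :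
    T m b c * t ^ m = ∑ j ∈ range (m / 2 + 1),
      binomTerm (fun n ↦ (n.centralBinom / 4 ^ n : ℝ)) (2 * b * t) (-(b ^ 2 - 4 * c) * t ^ 2)
        (m - 2 * j, j) := by
  rw [T_eq_sum_centralBinom, sum_mul]
  refine sum_congr rfl fun j hj ↦ ?_
  obtain ⟨i, rfl⟩ : ∃ i, m = i + 2 * j := ⟨m - 2 * j, by simp at hj; omega⟩
  rw [binomTerm, show i + 2 * j - 2 * j = i by omega, show i + 2 * j - j = i + j by omega,
    Nat.choose_symm_add, show 2 * b * t = 4 * (b / 2 * t) by ring,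
    show -(b ^ 2 - 4 * c) * t ^ 2 = 4 * ((c - (b / 2) ^ 2) * t ^ 2) by ring,
    mul_pow, mul_pow, mul_pow, mul_pow, pow_add, pow_add, pow_mul]
  field_simp

theorem abs_mul_add_abs_mul_sq_lt_one {p q t : ℝ} (ht : |t| < min 1 (|p| + |q| + 1)⁻¹) :
    |p * t| + |q * t ^ 2| < 1 := by
  have ht1 : |t| ≤ 1 := (ht.trans_le (min_le_left _ _)).le
  have htpq : (|p| + |q| + 1) * |t| < 1 :=
    (lt_inv_mul_iff₀ (by positivity)).1 (by simpa using ht.trans_le (min_le_right _ _))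
  have hsq : |t| ^ 2 ≤ |t| := pow_le_of_le_one (abs_nonneg t) ht1 two_ne_zero
  rw [abs_mul, abs_mul, abs_pow]
  nlinarith [abs_nonneg t, abs_nonneg q, mul_le_mul_of_nonneg_left hsq (abs_nonneg q)]

theorem stmt_4 (b c : ℝ) :
    ∃ ε > (0 : ℝ), ∀ t : ℝ, |t| < ε →
      0 < 1 - 2 * b * t + (b ^ 2 - 4 * c) * t ^ 2 ∧
      HasSum (fun n : ℕ => T n b c * t ^ n)
        ((Real.sqrt (1 - 2 * b * t + (b ^ 2 - 4 * c) * t ^ 2))⁻¹) := by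
  refine ⟨min 1 (|2 * b| + |-(b ^ 2 - 4 * c)| + 1)⁻¹, by positivity, fun t ht ↦ ?_⟩
  set x := 2 * b * t
  set y := -(b ^ 2 - 4 * c) * t ^ 2
  have hsmall : |x| + |y| < 1 := abs_mul_add_abs_mul_sq_lt_one ht
  have hxy : 1 - (x + y) = 1 - 2 * b * t + (b ^ 2 - 4 * c) * t ^ 2 := by ring
  refine ⟨hxy ▸ by linarith [abs_add_le x y, le_abs_self (x + y)], ?_⟩
  have hs := hasSum_centralBinom_mul_pow ((abs_add_le x y).trans_lt hsmall)
  have habs : Summable fun n ↦ |(n.centralBinom / 4 ^ n : ℝ)| * (|x| + |y|) ^ n := by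
    have hnn (n : ℕ) : |(n.centralBinom / 4 ^ n : ℝ)| = n.centralBinom / 4 ^ n :=
      abs_of_nonneg (by positivity)
    simp_rw [hnn]
    exact (hasSum_centralBinom_mul_pow (by rwa [abs_of_nonneg (by positivity)])).summable
  rw [← hxy]
  exact (hasSum_binomTerm hs habs).sum_range_add_two_mul.congr_fun
    (T_mul_pow_eq_sum_binomTerm b c t)
end

section
/- As a formal power series over the rationals (with b, c rational parameters), the square of \sum_{n\ge 0} T_n(b,c) t^n times (1 - 2bt + (b^2-4c)t^2) equals 1. -/
/-!
Write `P = x² + bx + c`, `d = b² - 4c`, `T_n = [xⁿ] Pⁿ`, `F = ∑ T_n tⁿ` and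
`q = 1 - 2bt + dt²`. With `θ = x d/dx`, the coefficient of `x^(n+2)` in `θg - (n+2)g`
vanishes for every polynomial `g`; for `g = (x² - c) P^(n+1)` this combination equals
`Pⁿ ((n+2)P² - (2n+3)bxP + (n+1)dx²)`, which yields the recurrence
`(n+2)T_(n+2) = (2n+3)b T_(n+1) - (n+1)d T_n`. The recurrence says `q F' = (b - dt) F`, and
as `q' = -2(b - dt)` the series `F² q` has derivative zero and constant term `1`.
-/

open Polynomial

noncomputable def Tq (n : ℕ) (b c : ℚ) : ℚ :=
  ((X ^ 2 + Polynomial.C b * X + Polynomial.C c) ^ n).coeff n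

lemma Polynomial.coeff_X_mul_derivative {R : Type*} [Semiring R] (f : R[X]) (n : ℕ) :
    (X * derivative f).coeff n = n * f.coeff n := by
  cases n with
  | zero => simp
  | succ n => rw [coeff_X_mul, coeff_derivative, ← Nat.cast_succ, Nat.cast_comm]

section CommSemiring

variable {R : Type*} [CommSemiring R]

noncomputable def monicQuadratic (b c : R) : R[X] := X ^ 2 + C b * X + C c

noncomputable def centralTrinomial (b c : R) (n : ℕ) : R := (monicQuadratic b c ^ n).coeff n

lemma derivative_monicQuadratic (b c : R) : derivative (monicQuadratic b c) = 2 * X + C b := by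
  simp only [monicQuadratic, derivative_add, derivative_X_sq, derivative_C_mul_X, derivative_C,
    add_zero, map_ofNat]

lemma centralTrinomial_zero (b c : R) : centralTrinomial b c 0 = 1 := by
  simp [centralTrinomial]

lemma centralTrinomial_one (b c : R) : centralTrinomial b c 1 = b := by
  simp [centralTrinomial, monicQuadratic, coeff_C]

end CommSemiring

section CommRing

variable {R : Type*} [CommRing R]

lemma monicQuadratic_recurrence_certificate (b c : R) (n : ℕ) :
    X * derivative ((X ^ 2 - C c) * monicQuadratic b c ^ (n + 1)) -
        C ((n : R) + 2) * ((X ^ 2 - C c) * monicQuadratic b c ^ (n + 1)) =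
      C ((n : R) + 2) * monicQuadratic b c ^ (n + 2) -
        C ((2 * n + 3) * b) * (X * monicQuadratic b c ^ (n + 1)) +
        C ((n + 1) * (b ^ 2 - 4 * c)) * (X * (X * monicQuadratic b c ^ n)) := by
  rw [derivative_mul, derivative_pow, derivative_monicQuadratic]
  simp only [derivative_sub, derivative_X_pow, derivative_C, add_tsub_cancel_right, pow_add]
  generalize monicQuadratic b c ^ n = Q
  simp only [monicQuadratic, map_add, map_mul, map_sub, map_pow, map_one, map_natCast, map_ofNat]
  push_cast
  ring

theorem centralTrinomial_recurrence (b c : R) (n : ℕ) :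
    (n + 2) * centralTrinomial b c (n + 2) =
      (2 * n + 3) * b * centralTrinomial b c (n + 1) -
        (n + 1) * (b ^ 2 - 4 * c) * centralTrinomial b c n := by
  have h := congrArg (coeff · (n + 2)) (monicQuadratic_recurrence_certificate b c n)
  rw [coeff_sub, coeff_X_mul_derivative, coeff_C_mul] at h
  simp only [coeff_sub, coeff_add, coeff_C_mul, coeff_X_mul] at h
  push_cast at h
  unfold centralTrinomial
  linear_combination -h

end CommRing

namespace PowerSeries

lemma coeff_X_mul_derivative {R : Type*} [CommSemiring R] (f : R⟦X⟧) (n : ℕ) :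
    coeff n (X * d⁄dX R f) = n * coeff n f := by
  cases n with
  | zero => simp
  | succ n => rw [coeff_succ_X_mul, coeff_derivative, ← Nat.cast_succ, Nat.cast_comm]

noncomputable def centralTrinomialSeries {R : Type*} [CommSemiring R] (b c : R) : R⟦X⟧ :=
  mk (centralTrinomial b c)

variable {R : Type*} [CommRing R]

theorem centralTrinomialSeries_derivative (b c : R) :
    (1 - C (2 * b) * X + C (b ^ 2 - 4 * c) * X ^ 2) * d⁄dX R (centralTrinomialSeries b c) =
      (C b - C (b ^ 2 - 4 * c) * X) * centralTrinomialSeries b c := by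
  set F := centralTrinomialSeries b c
  have hF (n : ℕ) : coeff n F = centralTrinomial b c n := coeff_mk _ _
  rw [show (1 - C (2 * b) * X + C (b ^ 2 - 4 * c) * X ^ 2) * d⁄dX R F =
      d⁄dX R F - C (2 * b) * (X * d⁄dX R F) + C (b ^ 2 - 4 * c) * (X * (X * d⁄dX R F)) by ring,
    sub_mul, mul_assoc]
  ext n
  rw [map_add, map_sub (coeff n), map_sub (coeff n), coeff_C_mul, coeff_C_mul, coeff_C_mul,
    coeff_C_mul]
  cases n with
  | zero =>
    simp [coeff_derivative, hF, centralTrinomial_zero, centralTrinomial_one]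
  | succ k =>
    rw [coeff_X_mul_derivative, coeff_succ_X_mul, coeff_X_mul_derivative, coeff_succ_X_mul,
      coeff_derivative, hF, hF, hF]
    push_cast
    linear_combination centralTrinomial_recurrence b c k

theorem centralTrinomialSeries_sq_mul [IsAddTorsionFree R] (b c : R) :
    centralTrinomialSeries b c ^ 2 * (1 - C (2 * b) * X + C (b ^ 2 - 4 * c) * X ^ 2) = 1 := by
  set F := centralTrinomialSeries b c
  set q : R⟦X⟧ := 1 - C (2 * b) * X + C (b ^ 2 - 4 * c) * X ^ 2
  have hq : d⁄dX R q = -2 * (C b - C (b ^ 2 - 4 * c) * X) := by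
    simp only [q, map_add, map_sub, Derivation.leibniz, Derivation.leibniz_pow, derivative_X,
      derivative_C, derivative_one, smul_eq_mul]
    rw [map_mul C 2 b, map_ofNat]
    ring
  refine derivative.ext ?_ ?_
  · calc d⁄dX R (F ^ 2 * q) = 2 * F * (q * d⁄dX R F) + F ^ 2 * d⁄dX R q := by
          simp only [Derivation.leibniz, Derivation.leibniz_pow, smul_eq_mul]
          ring
      _ = 0 := by rw [centralTrinomialSeries_derivative, hq]; ring
      _ = d⁄dX R 1 := derivative_one.symm
  · simp [F, q, centralTrinomialSeries, centralTrinomial_zero]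

end PowerSeries

theorem stmt_5 (b c : ℚ) :
    (PowerSeries.mk fun n => Tq n b c) ^ 2 *
      (1 - PowerSeries.C (2 * b) * PowerSeries.X +
        PowerSeries.C (b ^ 2 - 4 * c) * PowerSeries.X ^ 2) = 1 :=
  PowerSeries.centralTrinomialSeries_sq_mul b c
end

section
/- For b > 0 and c > 0, the limit of T_n(b,c)^{1/n} as n \to \infty equals b + 2\sqrt{c}. -/
open Filter Polynomial Real

/-!
Upper bound: all coefficients of `(x ^ 2 + b x + c) ^ n` are nonnegative, so `T_n (√c) ^ n` is at
most the value of that polynomial at `x = √c`, where `x ^ 2 + b x + c = (b + 2√c) x`.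

Lower bound: expanding `((x ^ 2 + c) + b x) ^ n` binomially,
`T_n = ∑ₘ C(n, 2m) b ^ (n - 2m) C(2m, m) c ^ m`, and `C(2m, m) ≥ 4 ^ m / (2m + 1)` gives
`2 (n + 1) T_n ≥ (b + 2√c) ^ n + (b - 2√c) ^ n`. Since
`|b - 2√c| < b + 2√c`, the right side is at least a fixed multiple of `(b + 2√c) ^ n`, and the
polynomial factor `n + 1` disappears under `n`-th roots.
-/

open Finset Topology

section OrderedSemiring

variable {R : Type*} [CommSemiring R] [PartialOrder R] [IsOrderedRing R]

theorem Polynomial.coeff_pow_nonneg {p : R[X]} (hp : ∀ i, 0 ≤ p.coeff i) (n i : ℕ) :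
    0 ≤ (p ^ n).coeff i := by
  induction n generalizing i with
  | zero => rw [pow_zero, coeff_one]; split_ifs <;> simp
  | succ n ih =>
    rw [pow_succ, coeff_mul]
    exact sum_nonneg fun ij _ => mul_nonneg (ih ij.1) (hp ij.2)

theorem Polynomial.coeff_mul_pow_le_eval {p : R[X]} (hp : ∀ i, 0 ≤ p.coeff i) {x : R}
    (hx : 0 ≤ x) (k : ℕ) : p.coeff k * x ^ k ≤ p.eval x := by
  rw [eval_eq_sum_range' (Nat.lt_succ_of_le (le_max_left p.natDegree k))]
  exact single_le_sum (fun j _ => mul_nonneg (hp j) (pow_nonneg hx j))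
    (mem_range.2 (Nat.lt_succ_of_le (le_max_right _ _)))

end OrderedSemiring

theorem Polynomial.coeff_X_sq_add_C_pow {R : Type*} [CommSemiring R] (c : R) (k j : ℕ) :
    ((X ^ 2 + C c) ^ k).coeff j = if 2 ∣ j then c ^ (k - j / 2) * k.choose (j / 2) else 0 := by
  have hexpand : (X ^ 2 + C c) ^ k = expand R 2 ((X + C c) ^ k) := by simp
  rw [hexpand, coeff_expand two_pos, coeff_X_add_C_pow]

theorem two_mul_sqrt_pow_add_neg_pow_le_coeff {c : ℝ} (hc : 0 ≤ c) {k n : ℕ} (hk : k ≤ n) :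
    (2 * √c) ^ k + (-(2 * √c)) ^ k ≤ 2 * (n + 1) * ((X ^ 2 + C c) ^ k).coeff k := by
  rw [coeff_X_sq_add_C_pow]
  rcases Nat.even_or_odd' k with ⟨m, rfl | rfl⟩
  · have hsq : (2 * √c) ^ (2 * m) = 4 ^ m * c ^ m := by
      rw [pow_mul, mul_pow, sq_sqrt hc, ← mul_pow]; norm_num
    have hcentral : (4 : ℝ) ^ m ≤ (n + 1) * (2 * m).choose m := by
      calc (4 : ℝ) ^ m ≤ (2 * m + 1) * (2 * m).choose m := by
            exact_mod_cast Nat.four_pow_le_two_mul_add_one_mul_central_binom m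
        _ ≤ (n + 1) * (2 * m).choose m := by gcongr; exact_mod_cast hk
    rw [if_pos (dvd_mul_right 2 m), Nat.mul_div_cancel_left m two_pos, two_mul m,
      Nat.add_sub_cancel, ← two_mul, (even_two_mul m).neg_pow, hsq]
    nlinarith [pow_nonneg hc m]
  · rw [if_neg (by omega), (odd_two_mul_add_one m).neg_pow]
    simp

theorem T_eq_sum (n : ℕ) (b c : ℝ) :
    T n b c = ∑ k ∈ range (n + 1), ((X ^ 2 + C c) ^ k).coeff k * b ^ (n - k) * n.choose k := by
  rw [T, show (X ^ 2 + C b * X + C c : ℝ[X]) = (X ^ 2 + C c) + C b * X by ring, add_pow,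
    finsetSum_coeff]
  refine sum_congr rfl fun k hk => ?_
  have hkn : k ≤ n := Nat.lt_succ_iff.mp (mem_range.mp hk)
  have hterm : (X ^ 2 + C c) ^ k * (C b * X) ^ (n - k) * (n.choose k : ℝ[X]) =
      C (b ^ (n - k) * n.choose k) * ((X ^ 2 + C c) ^ k * X ^ (n - k)) := by
    simp only [mul_pow, ← C_pow, C_mul, C_eq_natCast]
    ring
  rw [hterm, coeff_C_mul, coeff_mul_X_pow', if_pos (Nat.sub_le n k), Nat.sub_sub_self hkn]
  ring

theorem add_pow_add_sub_pow_le_T {b c : ℝ} (hb : 0 ≤ b) (hc : 0 ≤ c) (n : ℕ) :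
    (b + 2 * √c) ^ n + (b - 2 * √c) ^ n ≤ 2 * (n + 1) * T n b c := by
  rw [T_eq_sum, mul_sum, add_comm b, sub_eq_neg_add, add_pow, add_pow, ← sum_add_distrib]
  refine sum_le_sum fun k hk => ?_
  have hterm := two_mul_sqrt_pow_add_neg_pow_le_coeff hc (Nat.lt_succ_iff.mp (mem_range.mp hk))
  calc (2 * √c) ^ k * b ^ (n - k) * n.choose k + (-(2 * √c)) ^ k * b ^ (n - k) * n.choose k
      = ((2 * √c) ^ k + (-(2 * √c)) ^ k) * (b ^ (n - k) * n.choose k) := by ring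
    _ ≤ 2 * (n + 1) * ((X ^ 2 + C c) ^ k).coeff k * (b ^ (n - k) * n.choose k) := by gcongr
    _ = _ := by ring

theorem T_le {b c : ℝ} (hb : 0 ≤ b) (hc : 0 < c) (n : ℕ) : T n b c ≤ (b + 2 * √c) ^ n := by
  have hsqrt : 0 < √c := sqrt_pos.2 hc
  have hcoeff : ∀ i, 0 ≤ (X ^ 2 + C b * X + C c).coeff i := fun i => by
    simp only [coeff_add, coeff_X_pow, coeff_C_mul, coeff_X, coeff_C]
    split_ifs <;> positivity
  have heval : ((X ^ 2 + C b * X + C c) ^ n).eval √c = ((b + 2 * √c) * √c) ^ n := by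
    simp only [eval_pow, eval_add, eval_mul, eval_X, eval_C]
    congr 1
    linear_combination (-1) * sq_sqrt hc.le
  have key := coeff_mul_pow_le_eval (coeff_pow_nonneg hcoeff n) hsqrt.le n
  rw [heval, mul_pow] at key
  exact le_of_mul_le_mul_right key (by positivity)

theorem one_sub_abs_div_mul_pow_le {s d : ℝ} (hs : 0 < s) (hd : |d| ≤ s) {n : ℕ} (hn : n ≠ 0) :
    (1 - |d| / s) * s ^ n ≤ s ^ n + d ^ n := by
  set r := |d| / s
  have hr : r ^ n ≤ r := pow_le_of_le_one (by positivity) ((div_le_one hs).2 hd) hn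
  have habs : |d| ^ n = r ^ n * s ^ n := by rw [← mul_pow, div_mul_cancel₀ _ hs.ne']
  have hneg : -|d| ^ n ≤ d ^ n := by rw [← abs_pow]; exact neg_abs_le _
  nlinarith [pow_pos hs n]

theorem tendsto_const_div_add_one_rpow_one_div {κ : ℝ} (hκ : 0 < κ) :
    Tendsto (fun n : ℕ => (κ / (n + 1)) ^ ((1 : ℝ) / n)) atTop (𝓝 1) := by
  have hconst : Tendsto (fun n : ℕ => κ ^ ((1 : ℝ) / n)) atTop (𝓝 1) := by
    simpa using tendsto_const_nhds.rpow (tendsto_const_div_atTop_nhds_zero_nat 1) (Or.inl hκ.ne')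
  have hlin : Tendsto (fun n : ℕ => ((n : ℝ) + 1) ^ ((1 : ℝ) / n)) atTop (𝓝 1) := by
    refine ((tendsto_rpow_div_mul_add 1 1 (-1) one_ne_zero.symm).comp
      (tendsto_atTop_add_const_right atTop 1 tendsto_natCast_atTop_atTop)).congr fun n => ?_
    simp
  refine (div_one (1 : ℝ) ▸ hconst.div hlin one_ne_zero).congr fun n => ?_
  rw [Real.div_rpow hκ.le (by positivity), Pi.div_apply]

theorem tendsto_rpow_one_div_of_le_of_le {u p : ℕ → ℝ} {s : ℝ} (hs : 0 ≤ s)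
    (hp : Tendsto (fun n : ℕ => p n ^ ((1 : ℝ) / n)) atTop (𝓝 1)) (hp0 : ∀ n, 0 ≤ p n)
    (hlow : ∀ᶠ n in atTop, p n * s ^ n ≤ u n) (hup : ∀ᶠ n in atTop, u n ≤ s ^ n) :
    Tendsto (fun n : ℕ => u n ^ ((1 : ℝ) / n)) atTop (𝓝 s) := by
  have hroot : ∀ n : ℕ, n ≠ 0 → (s ^ n) ^ ((1 : ℝ) / n) = s := fun n hn => by
    rw [one_div, Real.pow_rpow_inv_natCast hs hn]
  refine tendsto_of_tendsto_of_tendsto_of_le_of_le' (one_mul s ▸ hp.mul_const s)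
    tendsto_const_nhds ?_ ?_
  · filter_upwards [hlow, eventually_ne_atTop 0] with n hn hn0
    calc p n ^ ((1 : ℝ) / n) * s = (p n * s ^ n) ^ ((1 : ℝ) / n) := by
          rw [Real.mul_rpow (hp0 n) (by positivity), hroot n hn0]
      _ ≤ u n ^ ((1 : ℝ) / n) := by gcongr; exact mul_nonneg (hp0 n) (by positivity)
  · filter_upwards [hlow, hup, eventually_ne_atTop 0] with n hlo hn hn0
    calc u n ^ ((1 : ℝ) / n) ≤ (s ^ n) ^ ((1 : ℝ) / n) := by
          gcongr; exact (mul_nonneg (hp0 n) (by positivity)).trans hlo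
      _ = s := hroot n hn0

theorem stmt_8 (b c : ℝ) (hb : 0 < b) (hc : 0 < c) :
    Tendsto (fun n : ℕ => (T n b c) ^ ((1 : ℝ) / n)) atTop
      (nhds (b + 2 * Real.sqrt c)) := by
  set s := b + 2 * √c
  have hsqrt : 0 < √c := sqrt_pos.2 hc
  have hs : 0 < s := by positivity
  have hd : |b - 2 * √c| < s := abs_lt.2 ⟨by linarith, by linarith⟩
  set κ := (1 - |b - 2 * √c| / s) / 2
  have hκ : 0 < κ := half_pos (sub_pos.2 ((div_lt_one hs).2 hd))
  refine tendsto_rpow_one_div_of_le_of_le hs.le (tendsto_const_div_add_one_rpow_one_div hκ)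
    (fun n => by positivity) ?_ (Eventually.of_forall (T_le hb.le hc))
  filter_upwards [eventually_ne_atTop 0] with n hn
  have hT := add_pow_add_sub_pow_le_T hb.le hc.le n
  calc κ / (n + 1) * s ^ n = (1 - |b - 2 * √c| / s) * s ^ n / (2 * (n + 1)) := by
        simp only [κ]; field_simp
    _ ≤ (s ^ n + (b - 2 * √c) ^ n) / (2 * (n + 1)) := by
        gcongr; exact one_sub_abs_div_mul_pow_le hs hd.le hn
    _ ≤ T n b c := by rw [div_le_iff₀ (by positivity)]; linarith
end

section
/- For b > 0 and c > 0, as n \to \infty, T_n(b,c) is asymptotically equivalent to (b+2\sqrt{c})^{n+1/2} / (2 c^{1/4} \sqrt{\pi n}); i.e. the ratio tends to 1. -/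
open Filter Polynomial Real

/-!
Write `c = s²`. On the circle `z = s e^{iθ}` one has `(z² + b z + c) / z = b + 2 s cos θ`, so
Cauchy's coefficient formula gives `T n b c = (2π)⁻¹ ∫_{-π}^{π} (b + 2 s cos θ)^n dθ`. With
`a = 2s / (b + 2s) ∈ (0, 1)` the integrand is `(b + 2s)^n (1 - a (1 - cos θ))^n`, and Laplace's
method (substitute `θ = u / √n`, dominate by a Gaussian via `1 - cos θ ≥ 2θ² / π²`, pass to the
pointwise limit `exp (-a u² / 2)`) gives `√n ∫_{-π}^{π} (1 - a (1 - cos θ))^n dθ → √(2π / a)`.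
-/

open MeasureTheory Set

open Complex Metric in
theorem Polynomial.circleIntegral_eval_div_pow_succ (p : ℂ[X]) (k : ℕ) {R : ℝ} (hR : 0 < R) :
    (∮ z in C(0, R), p.eval z / z ^ (k + 1)) = 2 * π * I * p.coeff k := by
  set N := p.natDegree + k + 1
  have hexpand : Set.EqOn (fun z => p.eval z / z ^ (k + 1))
      (fun z => ∑ j ∈ Finset.range N, p.coeff j * (z - 0) ^ ((j : ℤ) - (k + 1))) (sphere 0 R) := by
    intro z hz
    have hz0 : z ≠ 0 := ne_of_mem_sphere hz hR.ne'
    simp only [sub_zero, eval_eq_sum_range' (show p.natDegree < N by omega), Finset.sum_div]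
    refine Finset.sum_congr rfl fun j _ => ?_
    rw [zpow_sub₀ hz0, zpow_natCast, mul_div_assoc]
    norm_cast
  have hint (j : ℕ) : CircleIntegrable (fun z => p.coeff j * (z - 0) ^ ((j : ℤ) - (k + 1))) 0 R :=
    (circleIntegrable_sub_zpow_iff.2 (Or.inr (Or.inr (by simp [abs_of_pos hR, hR.ne])))).const_smul
      (a := p.coeff j)
  rw [circleIntegral.integral_congr hR.le hexpand,
    circleIntegral.integral_fun_sum fun j _ => hint j]
  simp only [circleIntegral.integral_const_mul]
  rw [Finset.sum_eq_single k]
  · simp_rw [show ((k : ℤ) - (k + 1)) = -1 by ring, zpow_neg_one]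
    rw [circleIntegral.integral_sub_center_inv _ hR.ne', mul_comm]
  · intro j _ hjk
    rw [circleIntegral.integral_sub_zpow_of_ne (by omega), mul_zero]
  · intro hk; exact absurd (Finset.mem_range.2 (by omega)) hk

open Complex in
theorem circleMap_zero_add_sq_div (R θ : ℝ) :
    circleMap 0 R θ + (R : ℂ) ^ 2 / circleMap 0 R θ = ((2 * R * Real.cos θ : ℝ) : ℂ) := by
  have he : Complex.exp (-θ * I) = (Complex.exp (θ * I))⁻¹ := by rw [neg_mul, Complex.exp_neg]
  push_cast
  rw [circleMap_zero, mul_right_comm, two_cos, he]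
  field_simp

theorem T_eq_intervalIntegral_cos_pow (b : ℝ) {c : ℝ} (hc : 0 < c) (n : ℕ) :
    T n b c = (∫ θ in (-π)..π, (b + 2 * √c * Real.cos θ) ^ n) / (2 * π) := by
  set s := √c
  have hs : 0 < s := Real.sqrt_pos.2 hc
  set P : ℂ[X] := (X ^ 2 + C b * X + C c).map Complex.ofRealHom
  have hcoeff : (P ^ n).coeff n = T n b c := by
    simp only [P, ← Polynomial.map_pow, coeff_map, T]
    rfl
  have hintegrand (θ : ℝ) : deriv (circleMap 0 s) θ •
      ((P ^ n).eval (circleMap 0 s θ) / circleMap 0 s θ ^ (n + 1)) =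
      Complex.I * ((b + 2 * s * Real.cos θ : ℝ) : ℂ) ^ n := by
    have hz : circleMap 0 s θ ≠ 0 := circleMap_ne_center hs.ne'
    have hcs : (c : ℂ) = (s : ℂ) ^ 2 := by norm_cast; exact (Real.sq_sqrt hc.le).symm
    have hquot :
        P.eval (circleMap 0 s θ) / circleMap 0 s θ = ((b + 2 * s * Real.cos θ : ℝ) : ℂ) := by
      rw [Complex.ofReal_add, ← circleMap_zero_add_sq_div s θ, ← hcs]
      simp only [P, Polynomial.map_add, Polynomial.map_pow, Polynomial.map_mul, map_X, map_C,
        Complex.ofRealHom_eq_coe, eval_add, eval_pow, eval_mul, eval_X, eval_C]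
      field_simp
      ring
    rw [deriv_circleMap, smul_eq_mul, eval_pow, pow_succ, ← div_div, ← div_pow, hquot]
    field_simp
  have hcircle := (P ^ n).circleIntegral_eval_div_pow_succ n hs
  rw [circleIntegral] at hcircle
  simp_rw [hintegrand, intervalIntegral.integral_const_mul, hcoeff] at hcircle
  simp_rw [← Complex.ofReal_pow, intervalIntegral.integral_ofReal] at hcircle
  have hreal : ∫ θ in (0 : ℝ)..2 * π, (b + 2 * s * Real.cos θ) ^ n = 2 * π * T n b c := by
    refine Complex.ofReal_injective (mul_left_cancel₀ Complex.I_ne_zero ?_)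
    rw [hcircle]
    push_cast
    ring
  have hperiodic : Function.Periodic (fun θ => (b + 2 * s * Real.cos θ) ^ n) (2 * π) :=
    fun θ => by simp only [Real.cos_add_two_pi]
  have hshift := hperiodic.intervalIntegral_add_eq 0 (-π)
  rw [zero_add, show -π + 2 * π = π by ring] at hshift
  rw [← hshift, hreal]
  field_simp

theorem abs_one_sub_mul_one_sub_cos_le {a θ : ℝ} (ha₀ : 0 ≤ a) (ha₁ : a ≤ 1) (hθ : |θ| ≤ π) :
    |1 - a * (1 - cos θ)| ≤ exp (-(2 * a * (1 - a) / π ^ 2) * θ ^ 2) := by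
  have hcos := cos_le_one_sub_mul_cos_sq hθ
  have hx₀ : 0 ≤ a * (1 - cos θ) := mul_nonneg ha₀ (by linarith [cos_le_one θ])
  have hx₂ : a * (1 - cos θ) ≤ 2 * a := by nlinarith [neg_one_le_cos θ]
  -- on `[0, 2a]`, `x ↦ |1 - x|` lies below the chord `1 - (1 - a) x`
  have hconvex : |1 - a * (1 - cos θ)| ≤ 1 - (1 - a) * (a * (1 - cos θ)) := by
    rw [abs_le]
    constructor <;> nlinarith [sq_nonneg (a - 1)]
  calc |1 - a * (1 - cos θ)| ≤ 1 - (1 - a) * (a * (1 - cos θ)) := hconvex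
    _ ≤ exp (-((1 - a) * (a * (1 - cos θ)))) := by
      linarith [add_one_le_exp (-((1 - a) * (a * (1 - cos θ))))]
    _ ≤ exp (-(2 * a * (1 - a) / π ^ 2) * θ ^ 2) := by
      gcongr
      have : 2 / π ^ 2 * θ ^ 2 ≤ 1 - cos θ := by linarith
      have := mul_le_mul_of_nonneg_left this (mul_nonneg (sub_nonneg.2 ha₁) ha₀)
      rw [neg_mul, neg_le_neg_iff]
      convert this using 1 <;> ring

theorem tendsto_sqrt_natCast_atTop : Tendsto (fun n : ℕ => √(n : ℝ)) atTop atTop :=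
  tendsto_sqrt_atTop.comp tendsto_natCast_atTop_atTop

theorem tendsto_nat_mul_one_sub_cos_div_sqrt (u : ℝ) :
    Tendsto (fun n : ℕ => (n : ℝ) * (1 - cos (u / √n))) atTop (nhds (u ^ 2 / 2)) := by
  rw [tendsto_iff_norm_sub_tendsto_zero]
  refine squeeze_zero' (Eventually.of_forall fun n => norm_nonneg _) ?_
    (tendsto_const_div_atTop_nhds_zero_nat (u ^ 4 * (5 / 96)))
  have hsmall : ∀ᶠ n : ℕ in atTop, |u / √n| ≤ 1 := by
    have := (tendsto_const_nhds (x := u)).div_atTop tendsto_sqrt_natCast_atTop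
    exact (abs_zero (α := ℝ) ▸ this.abs).eventually_le_const one_pos
  filter_upwards [hsmall, eventually_gt_atTop 0] with n hn hn₀
  have hn₀' : (0 : ℝ) < n := by exact_mod_cast hn₀
  have hsq : (u / √n) ^ 2 = u ^ 2 / n := by rw [div_pow, sq_sqrt hn₀'.le]
  rw [Real.norm_eq_abs]
  calc |(n : ℝ) * (1 - cos (u / √n)) - u ^ 2 / 2|
      = (n : ℝ) * |cos (u / √n) - (1 - (u / √n) ^ 2 / 2)| := by
        rw [← abs_of_pos hn₀', ← abs_mul, abs_of_pos hn₀', ← abs_neg, hsq]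
        congr 1
        field_simp
        ring
    _ ≤ n * (|u / √n| ^ 4 * (5 / 96)) := by gcongr; exact cos_bound hn
    _ = u ^ 4 * (5 / 96) / n := by
        rw [(by decide : Even 4).pow_abs, show (u / √n) ^ 4 = ((u / √n) ^ 2) ^ 2 by ring, hsq]
        field_simp

theorem tendsto_one_sub_mul_one_sub_cos_div_sqrt_pow (a u : ℝ) :
    Tendsto (fun n : ℕ => (1 - a * (1 - cos (u / √n))) ^ n) atTop
      (nhds (exp (-(a / 2) * u ^ 2))) := by
  have hlim : Tendsto (fun n : ℕ => (n : ℝ) * -(a * (1 - cos (u / √n)))) atTop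
      (nhds (-(a / 2) * u ^ 2)) := by
    convert ((tendsto_nat_mul_one_sub_cos_div_sqrt u).const_mul (-a)) using 1
    · ext n; ring
    · ring_nf
  simpa only [sub_eq_add_neg] using Real.tendsto_one_add_pow_exp_of_tendsto hlim

theorem tendsto_sqrt_mul_integral_one_sub_mul_one_sub_cos_pow {a : ℝ} (ha₀ : 0 < a)
    (ha₁ : a < 1) :
    Tendsto (fun n : ℕ => √n * ∫ θ in (-π)..π, (1 - a * (1 - cos θ)) ^ n) atTop
      (nhds √(2 * π / a)) := by
  set κ := 2 * a * (1 - a) / π ^ 2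
  have hκ : 0 < κ := by
    have : 0 < 1 - a := by linarith
    positivity
  let F : ℕ → ℝ → ℝ := fun n =>
    indicator (Ioc (-(π * √n)) (π * √n)) fun u => (1 - a * (1 - cos (u / √n))) ^ n
  have hbound (n : ℕ) (u : ℝ) : ‖F n u‖ ≤ exp (-κ * u ^ 2) := by
    by_cases hu : u ∈ Ioc (-(π * √n)) (π * √n)
    · have hn : 0 < √(n : ℝ) := pos_of_mul_pos_right (by linarith [hu.1, hu.2]) pi_pos.le
      have hθ : |u / √n| ≤ π := by
        rw [abs_div, abs_of_pos hn, div_le_iff₀ hn]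
        exact abs_le.2 ⟨by linarith [hu.1], hu.2⟩
      simp only [F, indicator_of_mem hu, norm_pow, Real.norm_eq_abs]
      calc |1 - a * (1 - cos (u / √n))| ^ n ≤ exp (-κ * (u / √n) ^ 2) ^ n := by
            gcongr; exact abs_one_sub_mul_one_sub_cos_le ha₀.le ha₁.le hθ
        _ = exp (-κ * u ^ 2) := by
            rw [← exp_nat_mul, div_pow, sq_sqrt (Nat.cast_nonneg n)]
            have : (n : ℝ) ≠ 0 := by positivity [sqrt_pos.1 hn]
            field_simp
    · simp only [F, indicator_of_notMem hu, norm_zero]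
      exact (exp_pos _).le
  have hpointwise (u : ℝ) : Tendsto (F · u) atTop (nhds (exp (-(a / 2) * u ^ 2))) := by
    refine (tendsto_one_sub_mul_one_sub_cos_div_sqrt_pow a u).congr' ?_
    have hgrow := tendsto_sqrt_natCast_atTop.const_mul_atTop pi_pos
    filter_upwards [hgrow.eventually_gt_atTop |u|] with n hn
    refine (indicator_of_mem (f := fun u => (1 - a * (1 - cos (u / √n))) ^ n)
      (mem_Ioc.2 ⟨?_, ?_⟩)).symm <;> linarith [neg_abs_le u, le_abs_self u]
  have hdominated := tendsto_integral_of_dominated_convergence _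
    (fun n => (Continuous.aestronglyMeasurable (by fun_prop)).indicator measurableSet_Ioc)
    (integrable_exp_neg_mul_sq hκ) (fun n => Eventually.of_forall (hbound n))
    (Eventually.of_forall hpointwise)
  rw [integral_gaussian, show π / (a / 2) = 2 * π / a by field_simp] at hdominated
  refine hdominated.congr' ?_
  filter_upwards [eventually_gt_atTop 0] with n hn
  have hn : 0 < √(n : ℝ) := sqrt_pos.2 (by exact_mod_cast hn)
  rw [integral_indicator measurableSet_Ioc,
    ← intervalIntegral.integral_of_le (by linarith [mul_pos pi_pos hn]),
    intervalIntegral.integral_comp_div (fun θ => (1 - a * (1 - cos θ)) ^ n) hn.ne', smul_eq_mul,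
    neg_div, mul_div_cancel_right₀ _ hn.ne']

theorem T_eq_pow_mul_intervalIntegral (b : ℝ) {c : ℝ} (hc : 0 < c) (hbc : b + 2 * √c ≠ 0)
    (n : ℕ) :
    T n b c = (b + 2 * √c) ^ n *
      (∫ θ in (-π)..π, (1 - 2 * √c / (b + 2 * √c) * (1 - cos θ)) ^ n) / (2 * π) := by
  have hfactor (θ : ℝ) : (b + 2 * √c * cos θ) ^ n =
      (b + 2 * √c) ^ n * (1 - 2 * √c / (b + 2 * √c) * (1 - cos θ)) ^ n := by
    rw [← mul_pow]
    congr 1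
    field_simp
    ring
  simp_rw [T_eq_intervalIntegral_cos_pow b hc, hfactor, intervalIntegral.integral_const_mul]

theorem stmt_9 (b c : ℝ) (hb : 0 < b) (hc : 0 < c) :
    Tendsto (fun n : ℕ =>
        T n b c /
          ((b + 2 * Real.sqrt c) ^ ((n : ℝ) + 1 / 2) /
            (2 * c ^ ((1 : ℝ) / 4) * Real.sqrt (Real.pi * n))))
      atTop (nhds 1) := by
  have hs : 0 < √c := sqrt_pos.2 hc
  have hM : 0 < b + 2 * √c := by positivity
  have hfourth : c ^ ((1 : ℝ) / 4) = √(√c) := by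
    rw [sqrt_eq_rpow, sqrt_eq_rpow, ← rpow_mul hc.le]
    norm_num
  have hconst : √(2 * π / (2 * √c / (b + 2 * √c))) * (√(√c) / (√π * √(b + 2 * √c))) = 1 := by
    rw [← mul_div_assoc, ← sqrt_mul (by positivity), ← sqrt_mul pi_pos.le,
      show 2 * π / (2 * √c / (b + 2 * √c)) * √c = π * (b + 2 * √c) by field_simp,
      div_self (by positivity)]
  have hlim := (tendsto_sqrt_mul_integral_one_sub_mul_one_sub_cos_pow (a := 2 * √c / (b + 2 * √c))
    (by positivity) ((div_lt_one hM).2 (by linarith))).mul_const (√(√c) / (√π * √(b + 2 * √c)))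
  rw [hconst] at hlim
  refine hlim.congr' ?_
  filter_upwards [eventually_gt_atTop 0] with n hn
  have : 0 < √(n : ℝ) := sqrt_pos.2 (by exact_mod_cast hn)
  rw [T_eq_pow_mul_intervalIntegral b hc hM.ne', hfourth, rpow_add hM, rpow_natCast,
    ← sqrt_eq_rpow, sqrt_mul pi_pos.le]
  field_simp
  rw [sq_sqrt pi_pos.le, mul_comm]
end

section
/- For c > 0 and b = 4\sqrt{c}, T_n(b,c)/c^{n/2} \sim 3 \cdot 6^n / \sqrt{6 \pi n} as n \to \infty; i.e. the ratio of the two sides tends to 1. -/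
open Filter Polynomial Real

open Finset Topology Stirling

/-! With `s = √c` one has `x² + 4s·x + s² = (x + s)² + 2s·x`, and the binomial theorem gives
`T_n = (6s)ⁿ · ∑ₖ Bₙₖ(2/3) · C(2k,k)/4ᵏ`, where `Bₙₖ` are the Bernstein (binomial) weights.
By Stirling `C(2k,k)/4ᵏ ~ 1/√(πk)`, and by Chebyshev's inequality the weights concentrate at
`k ≈ 2n/3`, so the average is `~ 1/√(2πn/3) = 3/√(6πn)`. -/

theorem coeff_sq_add_C_mul_X_pow {R : Type*} [CommSemiring R] (s a : R) (n : ℕ) :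
    (((X + C s) ^ 2 + C a * X) ^ n).coeff n =
      ∑ k ∈ range (n + 1), (n.choose k * k.centralBinom : R) * s ^ k * a ^ (n - k) := by
  rw [add_pow, finsetSum_coeff]
  refine sum_congr rfl fun k hk => ?_
  have hkn : k ≤ n := Nat.lt_succ_iff.mp (mem_range.mp hk)
  have hterm : ((X + C s) ^ 2) ^ k * (C a * X) ^ (n - k) * (n.choose k : R[X]) =
      C ((n.choose k : R) * a ^ (n - k)) * ((X + C s) ^ (2 * k) * X ^ (n - k)) := by
    simp only [← pow_mul, map_mul, map_pow, map_natCast]; ring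
  rw [hterm, coeff_C_mul, coeff_mul_X_pow', if_pos (Nat.sub_le n k), Nat.sub_sub_self hkn,
    coeff_X_add_C_pow, Nat.centralBinom_eq_two_mul_choose, two_mul, Nat.add_sub_cancel]
  ring

theorem sqrt_mul_centralBinom_div_four_pow (m : ℕ) :
    √m * (m.centralBinom / 4 ^ m) = stirlingSeq (2 * m) / stirlingSeq m ^ 2 := by
  rcases Nat.eq_zero_or_pos m with rfl | hm
  · simp
  have hfact : ((2 * m).factorial : ℝ) = m.centralBinom * m.factorial ^ 2 := by
    rw [Nat.centralBinom_eq_two_mul_choose, two_mul, ← Nat.add_choose_mul_factorial_mul_factorial]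
    push_cast; ring
  have h4 : (4 : ℝ) ^ m = 2 ^ (m * 2) := by rw [pow_mul']; norm_num
  have hsq : √(2 * (2 * m : ℕ) : ℝ) = 2 * √m := by
    push_cast
    rw [show (2 : ℝ) * (2 * m) = 2 ^ 2 * m by ring, sqrt_mul (by positivity), sqrt_sq (by norm_num)]
  simp only [stirlingSeq, hfact, hsq]
  have hm' : (0 : ℝ) < m := Nat.cast_pos.mpr hm
  field_simp
  rw [sq_sqrt (by positivity), sq_sqrt (by positivity), h4]
  push_cast
  ring

theorem tendsto_sqrt_mul_centralBinom_div_four_pow :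
    Tendsto (fun m : ℕ => √m * (m.centralBinom / 4 ^ m)) atTop (𝓝 (1 / √π)) := by
  have hlim := (tendsto_stirlingSeq_sqrt_pi.comp (tendsto_id.const_mul_atTop' two_pos)).div
    (tendsto_stirlingSeq_sqrt_pi.pow 2) (by positivity)
  rw [show 1 / √π = √π / √π ^ 2 by rw [sq, div_mul_cancel_right₀ (by positivity), one_div]]
  exact hlim.congr fun m => (sqrt_mul_centralBinom_div_four_pow m).symm

section Bernstein

variable {p : ℝ}

theorem bernsteinPolynomial_eval_nonneg (hp₀ : 0 ≤ p) (hp₁ : p ≤ 1) (n k : ℕ) :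
    0 ≤ (bernsteinPolynomial ℝ n k).eval p := by
  have : 0 ≤ 1 - p := sub_nonneg.mpr hp₁
  simp only [bernsteinPolynomial, eval_mul, eval_pow, eval_natCast, eval_X, eval_sub, eval_one]
  positivity

theorem sum_bernsteinPolynomial_eval (n : ℕ) (p : ℝ) :
    ∑ k ∈ range (n + 1), (bernsteinPolynomial ℝ n k).eval p = 1 := by
  simpa [eval_finsetSum] using congr_arg (eval p) (bernsteinPolynomial.sum ℝ n)

theorem sum_sq_mul_bernsteinPolynomial_eval (n : ℕ) (p : ℝ) :
    ∑ k ∈ range (n + 1), (n * p - k) ^ 2 * (bernsteinPolynomial ℝ n k).eval p =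
      n * p * (1 - p) := by
  simpa [eval_finsetSum, mul_assoc] using congr_arg (eval p) (bernsteinPolynomial.variance ℝ n)

theorem sum_bernsteinPolynomial_eval_tail_le (hp₀ : 0 ≤ p) (hp₁ : p ≤ 1) {δ : ℝ} (hδ : 0 < δ)
    {n : ℕ} (hn : 0 < n) :
    ∑ k ∈ range (n + 1) with δ * n < |n * p - (k : ℕ)|, (bernsteinPolynomial ℝ n k).eval p ≤
      p * (1 - p) / (δ ^ 2 * n) := by
  have hδn : 0 < δ * n := by positivity
  calc ∑ k ∈ range (n + 1) with δ * n < |n * p - (k : ℕ)|, (bernsteinPolynomial ℝ n k).eval p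
      ≤ ∑ k ∈ range (n + 1) with δ * n < |n * p - (k : ℕ)|,
          (n * p - k) ^ 2 / (δ * n) ^ 2 * (bernsteinPolynomial ℝ n k).eval p := by
        refine sum_le_sum fun k hk => le_mul_of_one_le_left
          (bernsteinPolynomial_eval_nonneg hp₀ hp₁ n k) ?_
        rw [one_le_div (by positivity), ← sq_abs (n * p - k)]
        exact pow_le_pow_left₀ hδn.le (mem_filter.mp hk).2.le 2
    _ ≤ ∑ k ∈ range (n + 1), (n * p - k) ^ 2 / (δ * n) ^ 2 * (bernsteinPolynomial ℝ n k).eval p :=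
        sum_le_sum_of_subset_of_nonneg (filter_subset _ _) fun k _ _ =>
          mul_nonneg (by positivity) (bernsteinPolynomial_eval_nonneg hp₀ hp₁ n k)
    _ = p * (1 - p) / (δ ^ 2 * n) := by
        simp only [div_mul_eq_mul_div, ← sum_div, sum_sq_mul_bernsteinPolynomial_eval]
        field_simp

theorem abs_sum_bernsteinPolynomial_eval_mul_le (hp₀ : 0 ≤ p) (hp₁ : p ≤ 1) {δ ε K : ℝ}
    (hδ : 0 < δ) (hε : 0 ≤ ε) {n : ℕ} (hn : 0 < n) (f : ℕ → ℝ)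
    (hnear : ∀ k : ℕ, |n * p - k| ≤ δ * n → |f k| ≤ ε) (hfar : ∀ k, |f k| ≤ K) :
    |∑ k ∈ range (n + 1), (bernsteinPolynomial ℝ n k).eval p * f k| ≤
      ε + K * (p * (1 - p) / (δ ^ 2 * n)) := by
  set B := fun k => (bernsteinPolynomial ℝ n k).eval p
  have hB : ∀ k, 0 ≤ B k := bernsteinPolynomial_eval_nonneg hp₀ hp₁ n
  have hK : 0 ≤ K := (abs_nonneg _).trans (hfar 0)
  calc |∑ k ∈ range (n + 1), B k * f k|
      ≤ ∑ k ∈ range (n + 1), B k * |f k| := by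
        refine (abs_sum_le_sum_abs _ _).trans_eq (sum_congr rfl fun k _ => ?_)
        rw [abs_mul, abs_of_nonneg (hB k)]
    _ = ∑ k ∈ range (n + 1) with ¬δ * n < |n * p - (k : ℕ)|, B k * |f k| +
          ∑ k ∈ range (n + 1) with δ * n < |n * p - (k : ℕ)|, B k * |f k| :=
        (sum_filter_not_add_sum_filter _ _ _).symm
    _ ≤ ∑ k ∈ range (n + 1), B k * ε +
          ∑ k ∈ range (n + 1) with δ * n < |n * p - (k : ℕ)|, B k * K := by
        refine add_le_add ?_ (sum_le_sum fun k _ => mul_le_mul_of_nonneg_left (hfar k) (hB k))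
        refine (sum_le_sum fun k hk => ?_).trans (sum_le_sum_of_subset_of_nonneg (filter_subset _ _)
          fun k _ _ => mul_nonneg (hB k) hε)
        exact mul_le_mul_of_nonneg_left (hnear k (not_lt.mp (mem_filter.mp hk).2)) (hB k)
    _ ≤ ε + K * (p * (1 - p) / (δ ^ 2 * n)) := by
        rw [← sum_mul, ← sum_mul, sum_bernsteinPolynomial_eval, one_mul, mul_comm]
        gcongr
        exact sum_bernsteinPolynomial_eval_tail_le hp₀ hp₁ hδ hn

theorem exists_forall_near_abs_sqrt_mul_sub_le (hp : 0 < p) {a : ℕ → ℝ} {L : ℝ}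
    (ha : Tendsto (fun k : ℕ => √k * a k) atTop (𝓝 L)) {ε : ℝ} (hε : 0 < ε) :
    ∃ δ > 0, ∀ᶠ n : ℕ in atTop, ∀ k : ℕ, |n * p - k| ≤ δ * n → |√n * a k - L / √p| ≤ ε := by
  have hcont : ContinuousAt (fun q : ℝ × ℝ => q.2 / √q.1) (p, L) :=
    continuous_snd.continuousAt.div continuous_fst.sqrt.continuousAt (sqrt_ne_zero'.mpr hp)
  obtain ⟨η, hη, hg⟩ := Metric.continuousAt_iff.mp hcont ε hε
  obtain ⟨N, hN⟩ := Metric.tendsto_atTop.mp ha η hη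
  set δ := min η p / 2
  have hδη : δ < η := by simp only [δ]; linarith [min_le_left η p]
  have hδp : δ < p := by simp only [δ]; linarith [min_le_right η p]
  refine ⟨δ, by positivity, ?_⟩
  filter_upwards [eventually_gt_atTop 0,
    tendsto_natCast_atTop_atTop.eventually_ge_atTop ((N : ℝ) / (p - δ))] with n hn hnN k hk
  have hn' : (0 : ℝ) < n := Nat.cast_pos.mpr hn
  have hkn : (p - δ) * n ≤ k := by linarith [(abs_le.mp hk).2]
  have hk₀ : (0 : ℝ) < k := lt_of_lt_of_le (by nlinarith) hkn
  have hkN : N ≤ k := by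
    have := (div_le_iff₀ (sub_pos.mpr hδp)).mp hnN
    exact_mod_cast (by linarith : (N : ℝ) ≤ k)
  have hdist : dist ((k : ℝ) / n, √k * a k) (p, L) < η := by
    refine Prod.dist_eq.trans_lt (max_lt ?_ (hN k hkN))
    rw [Real.dist_eq, div_sub' hn'.ne', abs_div, abs_of_pos hn', abs_sub_comm,
      div_lt_iff₀ hn']
    exact hk.trans_lt (by gcongr)
  have hval : √k * a k / √((k : ℝ) / n) = √n * a k := by
    rw [sqrt_div' _ hn'.le]
    field_simp
  have := hg hdist
  rw [Real.dist_eq, hval] at this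
  exact this.le

theorem tendsto_sqrt_mul_sum_bernsteinPolynomial_eval_mul (hp₀ : 0 < p) (hp₁ : p ≤ 1)
    {a : ℕ → ℝ} {M L : ℝ} (hM : ∀ k, |a k| ≤ M)
    (ha : Tendsto (fun k : ℕ => √k * a k) atTop (𝓝 L)) :
    Tendsto (fun n : ℕ => √n * ∑ k ∈ range (n + 1), (bernsteinPolynomial ℝ n k).eval p * a k)
      atTop (𝓝 (L / √p)) := by
  rw [Metric.tendsto_atTop]
  intro ε hε
  obtain ⟨δ, hδ, hnear⟩ := exists_forall_near_abs_sqrt_mul_sub_le hp₀ ha (half_pos hε)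
  set K := M + |L| / √p
  have hfar : Tendsto (fun n : ℕ => K * (p * (1 - p) / δ ^ 2) * (√n)⁻¹) atTop (𝓝 0) := by
    simpa using (tendsto_inv_atTop_zero.comp
      (tendsto_sqrt_atTop.comp tendsto_natCast_atTop_atTop)).const_mul (K * (p * (1 - p) / δ ^ 2))
  obtain ⟨N, hN⟩ := eventually_atTop.mp
    (hnear.and ((hfar.eventually (gt_mem_nhds (half_pos hε))).and (eventually_gt_atTop 0)))
  refine ⟨N, fun n hn => ?_⟩
  obtain ⟨hnear, hfar, hn₀⟩ := hN n hn
  have hsqrt : 1 ≤ √(n : ℝ) := one_le_sqrt.mpr (Nat.one_le_cast.mpr hn₀)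
  have hbound : ∀ k, |√n * a k - L / √p| ≤ K * √n := fun k => calc
    |√n * a k - L / √p| ≤ √n * M + |L| / √p := by
      refine (abs_sub _ _).trans (add_le_add ?_ (by rw [abs_div, abs_of_nonneg (sqrt_nonneg p)]))
      rw [abs_mul, abs_of_nonneg (sqrt_nonneg _)]
      exact mul_le_mul_of_nonneg_left (hM k) (sqrt_nonneg _)
    _ ≤ K * √n := by
      rw [add_mul]
      nlinarith [div_nonneg (abs_nonneg L) (sqrt_nonneg p)]
  have hcentre : √n * ∑ k ∈ range (n + 1), (bernsteinPolynomial ℝ n k).eval p * a k - L / √p =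
      ∑ k ∈ range (n + 1), (bernsteinPolynomial ℝ n k).eval p * (√n * a k - L / √p) := by
    simp only [mul_sub, sum_sub_distrib, ← sum_mul, sum_bernsteinPolynomial_eval, one_mul, mul_sum]
    ring_nf
  rw [Real.dist_eq, hcentre]
  calc _ ≤ ε / 2 + K * √n * (p * (1 - p) / (δ ^ 2 * n)) :=
        abs_sum_bernsteinPolynomial_eval_mul_le hp₀.le hp₁ hδ (half_pos hε).le hn₀ _ hnear hbound
    _ = ε / 2 + K * (p * (1 - p) / δ ^ 2) * (√n)⁻¹ := by
        have : (0 : ℝ) < √n := by positivity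
        field_simp
        linear_combination 2 * K * p * (1 - p) * sq_sqrt (Nat.cast_nonneg (α := ℝ) n)
    _ < ε := by linarith

end Bernstein

theorem T_four_mul_sq_eq (s : ℝ) (n : ℕ) :
    T n (4 * s) (s ^ 2) = (6 * s) ^ n *
      ∑ k ∈ range (n + 1), (bernsteinPolynomial ℝ n k).eval (2 / 3) * (k.centralBinom / 4 ^ k) := by
  have hpoly : (X ^ 2 + C (4 * s) * X + C (s ^ 2) : ℝ[X]) = (X + C s) ^ 2 + C (2 * s) * X := by
    simp only [map_mul, map_pow, map_ofNat]; ring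
  rw [T, hpoly, coeff_sq_add_C_mul_X_pow, mul_sum]
  refine sum_congr rfl fun k hk => ?_
  obtain ⟨m, rfl⟩ := Nat.exists_eq_add_of_le (Nat.lt_succ_iff.mp (mem_range.mp hk))
  simp only [bernsteinPolynomial, eval_mul, eval_pow, eval_natCast, eval_X, eval_sub, eval_one,
    Nat.add_sub_cancel_left]
  have hscale : (2 : ℝ) ^ m * 4 ^ k = (1 / 3) ^ m * (2 / 3) ^ k * 6 ^ k * 6 ^ m := calc
    (2 : ℝ) ^ m * 4 ^ k = (1 / 3 * 6) ^ m * (2 / 3 * 6) ^ k := by norm_num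
    _ = _ := by rw [mul_pow, mul_pow]; ring
  field_simp
  linear_combination ((k + m).choose k * k.centralBinom * s ^ k * s ^ m : ℝ) * hscale

theorem stmt_12 (b c : ℝ) (hc : 0 < c) (hb : b = 4 * Real.sqrt c) :
    Tendsto (fun n : ℕ =>
        (T n b c / c ^ ((n : ℝ) / 2)) / (3 * 6 ^ n / Real.sqrt (6 * Real.pi * n)))
      atTop (nhds 1) := by
  subst hb
  have hbound : ∀ k : ℕ, |(k.centralBinom : ℝ) / 4 ^ k| ≤ 1 := fun k => by
    rw [abs_of_nonneg (by positivity), div_le_one (by positivity)]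
    exact_mod_cast Nat.centralBinom_le_four_pow k
  have hlim := (tendsto_sqrt_mul_sum_bernsteinPolynomial_eval_mul (p := 2 / 3) (by norm_num)
    (by norm_num) hbound tendsto_sqrt_mul_centralBinom_div_four_pow).const_mul (√(6 * π) / 3)
  convert hlim using 2 with n
  · have hT := T_four_mul_sq_eq (√c) n
    rw [sq_sqrt hc.le] at hT
    rw [hT, rpow_div_two_eq_sqrt _ hc.le, rpow_natCast, sqrt_mul (by positivity)]
    field_simp
    ring
  · rw [div_div, ← sqrt_mul (by positivity), show 6 * π = 3 ^ 2 * (π * (2 / 3)) by ring,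
      sqrt_mul (by norm_num), sqrt_sq (by norm_num)]
    field_simp
end

section
/- For b > 0 and c < 0, \limsup_{n\to\infty} |T_n(b,c)|^{1/n} \le \sqrt{b^2-4c}. -/
/-!
`T n b c` is the `n`-th Taylor coefficient of `(z² + bz + c)ⁿ`, so Cauchy's estimate on the circle
`|z| = √(-c)` bounds it by `max |z² + bz + c|ⁿ / √(-c)ⁿ`. On that circle `c / z = -conj z`, hence
`z² + bz + c = z (b + 2i Im z)` has modulus at most `√(-c) √(b² - 4c)`, giving
`|T n b c| ≤ √(b² - 4c)ⁿ` for every `n`.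
-/

open Filter Polynomial Real

namespace Polynomial

variable {𝕜 : Type*} [NontriviallyNormedField 𝕜]

theorem iteratedDeriv_eval (p : 𝕜[X]) (k : ℕ) :
    iteratedDeriv k (fun x => p.eval x) = fun x => (derivative^[k] p).eval x := by
  induction k with
  | zero => simp
  | succ k ih =>
    ext x
    rw [iteratedDeriv_succ, ih, Polynomial.deriv, Function.iterate_succ_apply']

theorem iteratedDeriv_eval_zero (p : 𝕜[X]) (k : ℕ) :
    iteratedDeriv k (fun x => p.eval x) 0 = k.factorial * p.coeff k := by
  simp only [iteratedDeriv_eval]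
  rw [← coeff_zero_eq_eval_zero, coeff_iterate_derivative, zero_add,
    Nat.descFactorial_self, nsmul_eq_mul]

theorem norm_coeff_mul_pow_le_of_forall_mem_sphere {p : ℂ[X]} {R M : ℝ} (hR : 0 < R)
    (hM : ∀ z ∈ Metric.sphere (0 : ℂ) R, ‖p.eval z‖ ≤ M) (k : ℕ) :
    ‖p.coeff k‖ * R ^ k ≤ M := by
  have hcauchy := Complex.norm_iteratedDeriv_le_of_forall_mem_sphere_norm_le k hR
    p.differentiable.diffContOnCl hM
  rwa [iteratedDeriv_eval_zero, norm_mul, Complex.norm_natCast, mul_div_assoc,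
    mul_le_mul_iff_right₀ (by positivity), le_div_iff₀ (by positivity)] at hcauchy

end Polynomial

theorem Complex.norm_sq_add_mul_add_le {b c : ℝ} {z : ℂ} (hz : ‖z‖ ^ 2 = -c) :
    ‖z ^ 2 + b * z + c‖ ≤ ‖z‖ * √(b ^ 2 - 4 * c) := by
  have hfactor : z ^ 2 + b * z + c = z * (b + 2 * z.im * I) := by
    rw [show c = -Complex.normSq z by rw [Complex.normSq_eq_norm_sq, hz, neg_neg]]
    apply Complex.ext <;> simp [Complex.normSq_apply, pow_two] <;> ring
  have hnorm : ‖(b : ℂ) + 2 * z.im * I‖ = √(b ^ 2 + 4 * z.im ^ 2) := by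
    rw [Complex.norm_def, Complex.normSq_apply]
    congr 1
    simp
    ring
  have him : z.im ^ 2 ≤ -c := hz ▸ sq_le_sq' (neg_le_of_abs_le (Complex.abs_im_le_norm z))
    (le_of_abs_le (Complex.abs_im_le_norm z))
  rw [hfactor, norm_mul, hnorm]
  gcongr
  linarith

theorem abs_T_le (b c : ℝ) (hc : c < 0) (n : ℕ) : |T n b c| ≤ √(b ^ 2 - 4 * c) ^ n := by
  set p : ℂ[X] := (X ^ 2 + C (b : ℂ) * X + C (c : ℂ)) ^ n
  have hcoeff : ‖p.coeff n‖ = |T n b c| := by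
    have hmap : p = ((X ^ 2 + C b * X + C c) ^ n).map Complex.ofRealHom := by simp [p]
    rw [hmap, coeff_map, Complex.ofRealHom_eq_coe, Complex.norm_real, Real.norm_eq_abs, T]
  have hr : 0 < √(-c) := Real.sqrt_pos.mpr (neg_pos.mpr hc)
  have heval : ∀ z ∈ Metric.sphere (0 : ℂ) √(-c),
      ‖p.eval z‖ ≤ (√(-c) * √(b ^ 2 - 4 * c)) ^ n := by
    intro z hz
    rw [mem_sphere_zero_iff_norm] at hz
    have hnormsq : ‖z‖ ^ 2 = -c := by rw [hz, Real.sq_sqrt (neg_nonneg.mpr hc.le)]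
    simp only [p, eval_pow, eval_add, eval_mul, eval_C, eval_X, norm_pow, ← hz]
    gcongr
    exact Complex.norm_sq_add_mul_add_le hnormsq
  have hcauchy := norm_coeff_mul_pow_le_of_forall_mem_sphere hr heval n
  rw [hcoeff, mul_pow, mul_comm] at hcauchy
  exact le_of_mul_le_mul_left hcauchy (pow_pos hr n)

theorem stmt_14_general (b c : ℝ) (hc : c < 0) :
    Filter.limsup (fun n : ℕ => |T n b c| ^ ((1 : ℝ) / n)) atTop ≤
      Real.sqrt (b ^ 2 - 4 * c) := by
  refine limsup_le_of_le (isBoundedUnder_of ⟨0, fun n => by positivity⟩).isCoboundedUnder_le ?_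
  filter_upwards [eventually_ne_atTop 0] with n hn
  calc |T n b c| ^ ((1 : ℝ) / n) ≤ (√(b ^ 2 - 4 * c) ^ n) ^ ((1 : ℝ) / n) := by
        gcongr
        exact abs_T_le b c hc n
    _ = √(b ^ 2 - 4 * c) := by
        rw [one_div, Real.pow_rpow_inv_natCast (Real.sqrt_nonneg _) hn]

theorem stmt_14 (b c : ℝ) (hb : 0 < b) (hc : c < 0) :
    Filter.limsup (fun n : ℕ => |T n b c| ^ ((1 : ℝ) / n)) atTop ≤
      Real.sqrt (b ^ 2 - 4 * c) :=
  stmt_14_general b c hc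
end

section
/- For b > 0 and c > 0, the sequence T_n(b,c)/(b+2\sqrt{c})^n satisfies \liminf_{n\to\infty} n^{1/2} T_n(b,c)/(b+2\sqrt{c})^n > 0; in particular T_n(b,c)^{1/n} \to b+2\sqrt{c}. -/
/-!
Substituting `x = √c e^{iθ}` turns the coefficient extraction into the Laplace-type integral
`2π T_n(b,c) = ∫_{-π}^{π} (b + 2√c cos θ)^n dθ`. Its integrand peaks at `θ = 0` with value
`(b + 2√c)^n` and, since `1 - cos θ` is comparable to `θ²` (`1 - θ²/2 ≤ cos θ ≤ 1 - 2θ²/π²`),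
stays within a constant factor of that peak on a window of width `≍ n^{-1/2}` and decays like
`(1 + nθ²)⁻¹` outside it, up to an exponentially smaller error. Hence `√n T_n / (b + 2√c)^n` is
eventually trapped between two positive constants, which gives both claims.
-/

open Filter Polynomial Real

open Topology

open Complex in
theorem integral_exp_intCast_mul_mul_I (k : ℤ) :
    ∫ θ : ℝ in (-π)..π, exp (k * θ * I) = if k = 0 then 2 * (π : ℂ) else 0 := by
  split_ifs with hk
  · simp [hk, two_mul]
  have hkI : (k : ℂ) * I ≠ 0 := by simp [hk, I_ne_zero]
  have hper : exp (k * I * π) = exp (k * I * (-π : ℝ)) := by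
    rw [exp_eq_exp_iff_exists_int]
    exact ⟨k, by push_cast; ring⟩
  simp only [mul_right_comm _ (_ : ℂ) I, integral_exp_mul_complex hkI, hper, sub_self, zero_div]

open Complex in
theorem Polynomial.integral_eval_mul_exp_mul_I (p : ℂ[X]) (r : ℝ) (n : ℕ) :
    ∫ θ : ℝ in (-π)..π, p.eval (r * exp (θ * I)) * exp (-(n * θ * I)) =
      2 * π * r ^ n * p.coeff n := by
  have hdeg : p.natDegree < p.natDegree + n + 1 := by omega
  have hterm : ∀ θ : ℝ, ∀ i : ℕ, p.coeff i * (r * exp (θ * I)) ^ i * exp (-(n * θ * I)) =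
      p.coeff i * r ^ i * exp (((i - n : ℤ) : ℂ) * θ * I) := by
    intro θ i
    rw [mul_pow, ← Complex.exp_nat_mul, mul_assoc, mul_assoc, ← Complex.exp_add]
    push_cast; ring_nf
  simp only [eval_eq_sum_range' hdeg, Finset.sum_mul, hterm]
  rw [intervalIntegral.integral_finsetSum fun i _ =>
    (by fun_prop : Continuous _).intervalIntegrable _ _]
  simp only [intervalIntegral.integral_const_mul, integral_exp_intCast_mul_mul_I, sub_eq_zero,
    Nat.cast_inj, mul_ite, mul_zero, Finset.sum_ite_eq', Finset.mem_range]
  rw [if_pos (by omega)]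
  ring

open Complex in
theorem T_mul_two_pi (b : ℝ) {c : ℝ} (hc : 0 < c) (n : ℕ) :
    T n b c * (2 * π) = ∫ θ : ℝ in (-π)..π, (b + 2 * √c * Real.cos θ) ^ n := by
  set R := √c
  set p : ℂ[X] := (X ^ 2 + C (b : ℂ) * X + C (c : ℂ)) ^ n
  have hR : (R : ℂ) ≠ 0 := by exact_mod_cast (Real.sqrt_pos.2 hc).ne'
  have hRc : (R : ℂ) ^ 2 = c := by exact_mod_cast Real.sq_sqrt hc.le
  -- On the circle `z = R e^{iθ}` one has `(z ^ 2 + b z + R ^ 2) / z = b + 2 R cos θ`.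
  have hcircle : ∀ θ : ℝ, p.eval (R * exp (θ * I)) * exp (-(n * θ * I)) =
      R ^ n * (((b + 2 * R * Real.cos θ) ^ n : ℝ) : ℂ) := by
    intro θ
    have hinv : exp (θ * I) * exp (-(θ * I)) = 1 := by rw [← Complex.exp_add]; simp
    have hpow : exp (-(n * θ * I)) = exp (-(θ * I)) ^ n := by
      rw [← Complex.exp_nat_mul]; ring_nf
    rw [hpow, eval_pow, ← mul_pow, Complex.ofReal_pow, ← mul_pow]
    push_cast
    rw [Complex.cos, neg_mul, ← hRc]
    congr 1
    simp only [eval_add, eval_mul, eval_pow, eval_X, eval_C]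
    linear_combination (R ^ 2 * exp (θ * I) + b * R) * hinv
  have hcoeff : p.coeff n = T n b c := by
    have : p = ((X ^ 2 + C b * X + C c) ^ n).map (algebraMap ℝ ℂ) := by
      simp [p, Polynomial.map_pow]
    rw [this, coeff_map]
    rfl
  have key := p.integral_eval_mul_exp_mul_I R n
  simp only [hcircle, hcoeff, intervalIntegral.integral_const_mul,
    intervalIntegral.integral_ofReal] at key
  have hcast : ((T n b c * (2 * π) : ℝ) : ℂ) =
      ((∫ θ : ℝ in (-π)..π, (b + 2 * R * Real.cos θ) ^ n : ℝ) : ℂ) :=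
    mul_left_cancel₀ (pow_ne_zero n hR) (by push_cast; linear_combination -key)
  exact_mod_cast hcast

theorem one_sub_pow_le_inv_one_add_mul {x : ℝ} (h0 : 0 ≤ x) (h1 : x ≤ 1) (n : ℕ) :
    (1 - x) ^ n ≤ (1 + n * x)⁻¹ := by
  rw [← one_div, le_div_iff₀ (by positivity)]
  calc (1 - x) ^ n * (1 + n * x) ≤ (1 - x) ^ n * (1 + x) ^ n := by
        gcongr; exact one_add_mul_le_pow (by linarith) n
    _ = (1 - x ^ 2) ^ n := by rw [← mul_pow]; ring
    _ ≤ 1 := pow_le_one₀ (by nlinarith) (by nlinarith)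

theorem integral_inv_one_add_mul_sq_le {a : ℝ} (ha : 0 < a) (x y : ℝ) :
    ∫ θ in x..y, (1 + a * θ ^ 2)⁻¹ ≤ π / √a := by
  have hsa : √a ≠ 0 := (sqrt_pos.2 ha).ne'
  have hsq : ∀ θ : ℝ, 1 + a * θ ^ 2 = 1 + (√a * θ) ^ 2 := fun θ => by
    rw [mul_pow, sq_sqrt ha.le]
  simp only [hsq]
  rw [intervalIntegral.integral_comp_mul_left (fun u => (1 + u ^ 2)⁻¹) hsa,
    integral_inv_one_add_sq, smul_eq_mul, inv_mul_eq_div]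
  gcongr
  linarith [arctan_lt_pi_div_two (√a * y), neg_pi_div_two_lt_arctan (√a * x)]

section CosinePowerIntegral

variable {b A θ : ℝ} {n : ℕ}

theorem neg_abs_sub_pow_le_add_mul_cos_pow (hA : 0 ≤ A) :
    -|b - A| ^ n ≤ (b + A * cos θ) ^ n := by
  rcases le_or_gt 0 (b + A * cos θ) with hpos | hneg
  · have := pow_nonneg (abs_nonneg (b - A)) n
    linarith [pow_nonneg hpos n]
  · have habs : |b + A * cos θ| ≤ |b - A| := by
      rw [abs_of_neg hneg]
      nlinarith [neg_one_le_cos θ, le_abs_self (A - b), abs_sub_comm b A]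
    calc -|b - A| ^ n ≤ -|b + A * cos θ| ^ n := by gcongr
      _ ≤ (b + A * cos θ) ^ n := by rw [← abs_pow]; exact neg_abs_le _

theorem half_pow_le_add_mul_cos_pow (hb : 0 ≤ b) (hA : 0 ≤ A) (hn : n ≠ 0)
    (hθ : θ ^ 2 ≤ 1 / n) : (b + A) ^ n / 2 ≤ (b + A * cos θ) ^ n := by
  have hn' : (1 : ℝ) ≤ n := by exact_mod_cast Nat.one_le_iff_ne_zero.2 hn
  rcases (add_nonneg hb hA).eq_or_lt with hM | hM
  · rw [← hM, zero_pow hn, zero_div]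
    exact pow_nonneg (by nlinarith [neg_one_le_cos θ]) n
  set x := A / (2 * (b + A))
  have hx0 : 0 ≤ x := by positivity
  have hx : x ≤ 1 / 2 := by rw [div_le_iff₀ (by positivity)]; linarith
  have hxn : x / n ≤ x := div_le_self hx0 hn'
  have hcos : (b + A) * (1 - x / n) ≤ b + A * cos θ := by
    have hcos : 1 - 1 / (2 * n) ≤ cos θ := by
      have : 1 / (2 * n) = (1 / n : ℝ) / 2 := by ring
      linarith [one_sub_sq_div_two_le_cos (x := θ)]
    have : (b + A) * (1 - x / n) = b + A * (1 - 1 / (2 * n)) := by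
      simp only [x]; field_simp; ring
    rw [this]
    linarith [mul_le_mul_of_nonneg_left hcos hA]
  have hbern : 1 - x ≤ (1 - x / n) ^ n := by
    have := one_add_mul_le_pow (a := -(x / n)) (by linarith) n
    rwa [mul_neg, mul_div_cancel₀ _ (by positivity), ← sub_eq_add_neg, ← sub_eq_add_neg]
      at this
  calc (b + A) ^ n / 2 ≤ (b + A) ^ n * (1 - x / n) ^ n := by
        nlinarith [pow_pos hM n]
    _ = ((b + A) * (1 - x / n)) ^ n := (mul_pow _ _ _).symm
    _ ≤ (b + A * cos θ) ^ n := pow_le_pow_left₀ (by nlinarith) hcos n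

theorem pow_div_sqrt_sub_le_integral_add_mul_cos_pow (hb : 0 ≤ b) (hA : 0 ≤ A)
    (hn : n ≠ 0) :
    (b + A) ^ n / √n - 2 * π * |b - A| ^ n ≤ ∫ θ in (-π)..π, (b + A * cos θ) ^ n := by
  set r := |b - A| ^ n
  set s := (√n)⁻¹
  have hsqrt : 1 ≤ √n := one_le_sqrt.2 (by exact_mod_cast Nat.one_le_iff_ne_zero.2 hn)
  have hs0 : 0 < s := by positivity
  have hsπ : s ≤ π := (inv_le_one_of_one_le₀ hsqrt).trans (by linarith [pi_gt_three])
  have hcont : Continuous fun θ => (b + A * cos θ) ^ n + r := by fun_prop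
  have hcore : (b + A) ^ n / √n ≤ ∫ θ in (-s)..s, ((b + A * cos θ) ^ n + r) := by
    calc (b + A) ^ n / √n = ∫ _ in (-s)..s, (b + A) ^ n / 2 := by
          rw [intervalIntegral.integral_const, smul_eq_mul]; simp only [s]; field_simp; ring
      _ ≤ ∫ θ in (-s)..s, ((b + A * cos θ) ^ n + r) := by
          refine intervalIntegral.integral_mono_on (by linarith) intervalIntegrable_const
            (hcont.intervalIntegrable _ _) fun θ hθ => ?_
          have hθ : θ ^ 2 ≤ 1 / n := by
            rw [one_div, ← sq_sqrt (Nat.cast_nonneg n), ← inv_pow]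
            exact sq_le_sq' hθ.1 hθ.2
          linarith [half_pow_le_add_mul_cos_pow hb hA hn hθ, pow_nonneg (abs_nonneg (b - A)) n]
  have hwhole : ∫ θ in (-s)..s, ((b + A * cos θ) ^ n + r) ≤
      ∫ θ in (-π)..π, ((b + A * cos θ) ^ n + r) :=
    intervalIntegral.integral_mono_interval (by linarith) (by linarith) (by linarith)
      (.of_forall fun θ => by
        rw [Pi.zero_apply]
        linarith [neg_abs_sub_pow_le_add_mul_cos_pow (b := b) (θ := θ) (n := n) hA])
      (hcont.intervalIntegrable _ _)
  have hshift : ∫ θ in (-π)..π, ((b + A * cos θ) ^ n + r) =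
      (∫ θ in (-π)..π, (b + A * cos θ) ^ n) + 2 * π * r := by
    rw [intervalIntegral.integral_add ((by fun_prop : Continuous _).intervalIntegrable _ _)
      intervalIntegrable_const, intervalIntegral.integral_const, smul_eq_mul]
    ring
  linarith

theorem add_mul_cos_pow_le (hb : 0 ≤ b) (hA : 0 < A) (hθ : |θ| ≤ π) :
    (b + A * cos θ) ^ n ≤
      (b + A) ^ n * (1 + 2 * A / (π ^ 2 * (b + A)) * n * θ ^ 2)⁻¹ + max b A ^ n := by
  have hM : 0 < b + A := by linarith
  rcases le_total (cos θ) 0 with hcos | hcos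
  · have habs : |b + A * cos θ| ≤ max b A := by
      rw [abs_le]
      constructor <;> nlinarith [neg_one_le_cos θ, le_max_left b A, le_max_right b A]
    have : (b + A * cos θ) ^ n ≤ max b A ^ n :=
      (le_abs_self _).trans <|
        abs_pow (b + A * cos θ) n ▸ pow_le_pow_left₀ (abs_nonneg _) habs n
    have : 0 ≤ (1 + 2 * A / (π ^ 2 * (b + A)) * n * θ ^ 2)⁻¹ := by positivity
    nlinarith [pow_nonneg hM.le n]
  set x := 2 * A / (π ^ 2 * (b + A)) * θ ^ 2
  have hbase : b + A * cos θ ≤ (b + A) * (1 - x) := by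
    have := mul_le_mul_of_nonneg_left (cos_le_one_sub_mul_cos_sq hθ) hA.le
    have : (b + A) * (1 - x) = b + A * (1 - 2 / π ^ 2 * θ ^ 2) := by
      simp only [x]; field_simp; ring
    linarith
  have hbase0 : 0 ≤ b + A * cos θ := by positivity
  have hx1 : x ≤ 1 := by nlinarith
  have hx : 2 * A / (π ^ 2 * (b + A)) * n * θ ^ 2 = n * x := by simp only [x]; ring
  calc (b + A * cos θ) ^ n ≤ ((b + A) * (1 - x)) ^ n := pow_le_pow_left₀ hbase0 hbase n
    _ = (b + A) ^ n * (1 - x) ^ n := mul_pow _ _ _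
    _ ≤ (b + A) ^ n * (1 + n * x)⁻¹ := by
        gcongr; exact one_sub_pow_le_inv_one_add_mul (by positivity) hx1 n
    _ ≤ _ := by rw [hx]; linarith [pow_nonneg (hb.trans (le_max_left b A)) n]

theorem integral_add_mul_cos_pow_le (hb : 0 ≤ b) (hA : 0 < A) (hn : n ≠ 0) :
    ∫ θ in (-π)..π, (b + A * cos θ) ^ n ≤
      (b + A) ^ n * (π / √(2 * A / (π ^ 2 * (b + A)) * n)) + 2 * π * max b A ^ n := by
  set a := 2 * A / (π ^ 2 * (b + A)) * n
  have hn' : (0 : ℝ) < n := by positivity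
  have ha : 0 < a := by positivity
  have hinv : Continuous fun θ : ℝ => (1 + a * θ ^ 2)⁻¹ :=
    by fun_prop (disch := intro θ; positivity)
  calc ∫ θ in (-π)..π, (b + A * cos θ) ^ n
      ≤ ∫ θ in (-π)..π, ((b + A) ^ n * (1 + a * θ ^ 2)⁻¹ + max b A ^ n) :=
        intervalIntegral.integral_mono_on (by linarith [pi_pos])
          ((by fun_prop : Continuous _).intervalIntegrable _ _)
          ((hinv.const_mul _).add continuous_const |>.intervalIntegrable _ _)
          fun θ hθ => add_mul_cos_pow_le hb hA (abs_le.2 hθ)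
    _ = (b + A) ^ n * (∫ θ in (-π)..π, (1 + a * θ ^ 2)⁻¹) + 2 * π * max b A ^ n := by
        rw [intervalIntegral.integral_add ((hinv.const_mul _).intervalIntegrable _ _)
          intervalIntegrable_const, intervalIntegral.integral_const_mul,
          intervalIntegral.integral_const, smul_eq_mul]
        ring
    _ ≤ _ := by gcongr; exact integral_inv_one_add_mul_sq_le ha _ _

end CosinePowerIntegral

theorem sqrt_natCast_le_self (n : ℕ) : √(n : ℝ) ≤ n :=
  sqrt_le_self_iff.2 <| by rcases n with _ | n <;> simp

theorem tendsto_sqrt_mul_pow_of_lt_one {ρ : ℝ} (h0 : 0 ≤ ρ) (h1 : ρ < 1) :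
    Tendsto (fun n : ℕ => √n * ρ ^ n) atTop (𝓝 0) := by
  have hlin : Tendsto (fun n : ℕ => (n : ℝ) * ρ ^ n) atTop (𝓝 0) := by
    simpa using tendsto_pow_const_mul_const_pow_of_lt_one 1 h0 h1
  refine squeeze_zero (fun n => by positivity) (fun n => ?_) hlin
  gcongr
  exact sqrt_natCast_le_self n

theorem tendsto_const_rpow_one_div {x : ℝ} (hx : 0 < x) :
    Tendsto (fun n : ℕ => x ^ ((1 : ℝ) / n)) atTop (𝓝 1) := by
  simpa [Function.comp_def] using ((continuousAt_const_rpow hx.ne').tendsto.comp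
    (tendsto_one_div_atTop_nhds_zero_nat (𝕜 := ℝ)))

theorem tendsto_rpow_one_div_of_eventually_mem_Icc {u : ℕ → ℝ} {δ C : ℝ} (hδ : 0 < δ)
    (hu : ∀ᶠ n in atTop, u n ∈ Set.Icc δ C) :
    Tendsto (fun n : ℕ => u n ^ ((1 : ℝ) / n)) atTop (𝓝 1) := by
  obtain ⟨m, hm⟩ := hu.exists
  refine tendsto_of_tendsto_of_tendsto_of_le_of_le' (tendsto_const_rpow_one_div hδ)
    (tendsto_const_rpow_one_div (hδ.trans_le (hm.1.trans hm.2))) ?_ ?_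
  · filter_upwards [hu] with n hn using rpow_le_rpow hδ.le hn.1 (by positivity)
  · filter_upwards [hu] with n hn using rpow_le_rpow (hδ.le.trans hn.1) hn.2 (by positivity)

theorem tendsto_sqrt_rpow_one_div :
    Tendsto (fun n : ℕ => √n ^ ((1 : ℝ) / n)) atTop (𝓝 1) := by
  have hlin : Tendsto (fun n : ℕ => (n : ℝ) ^ ((1 : ℝ) / n)) atTop (𝓝 1) :=
    tendsto_rpow_div.comp tendsto_natCast_atTop_atTop
  refine tendsto_of_tendsto_of_tendsto_of_le_of_le' tendsto_const_nhds hlin ?_ ?_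
  · filter_upwards [eventually_ge_atTop 1] with n hn
    exact one_le_rpow (one_le_sqrt.2 (by exact_mod_cast hn)) (by positivity)
  · exact .of_forall fun n =>
      rpow_le_rpow (sqrt_nonneg _) (sqrt_natCast_le_self n) (by positivity)

theorem tendsto_rpow_one_div_of_sqrt_mul_div_pow_mem_Icc {a : ℕ → ℝ} {M δ C : ℝ}
    (hM : 0 < M) (hδ : 0 < δ)
    (ha : ∀ᶠ n : ℕ in atTop, √n * a n / M ^ n ∈ Set.Icc δ C) :
    Tendsto (fun n : ℕ => a n ^ ((1 : ℝ) / n)) atTop (𝓝 M) := by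
  have hlim := ((tendsto_rpow_one_div_of_eventually_mem_Icc hδ ha).mul_const M).div
    tendsto_sqrt_rpow_one_div one_ne_zero
  rw [one_mul, div_one] at hlim
  refine hlim.congr' ?_
  filter_upwards [ha, eventually_ne_atTop 0] with n hn hn0
  have hsqrt : 0 < √n := by positivity
  have hu : 0 ≤ √n * a n / M ^ n := hδ.le.trans hn.1
  have hMn : (M ^ n) ^ ((1 : ℝ) / n) = M := by
    rw [one_div, pow_rpow_inv_natCast hM.le hn0]
  calc (√n * a n / M ^ n) ^ ((1 : ℝ) / n) * M / √n ^ ((1 : ℝ) / n)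
      = (√n * a n / M ^ n * M ^ n / √n) ^ ((1 : ℝ) / n) := by
        rw [div_rpow (by positivity) hsqrt.le, mul_rpow hu (by positivity), hMn]
    _ = a n ^ ((1 : ℝ) / n) := by field_simp

section Normalized

variable {b c : ℝ} {n : ℕ}

theorem inv_two_pi_sub_le_sqrt_mul_T_div_pow (hb : 0 ≤ b) (hc : 0 < c) (hn : n ≠ 0) :
    (2 * π)⁻¹ - √n * (|b - 2 * √c| / (b + 2 * √c)) ^ n ≤
      √n * T n b c / (b + 2 * √c) ^ n := by
  have hM : 0 < (b + 2 * √c) ^ n := by positivity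
  have h := pow_div_sqrt_sub_le_integral_add_mul_cos_pow hb (by positivity : 0 ≤ 2 * √c) hn
  rw [← T_mul_two_pi b hc] at h
  rw [div_pow, le_div_iff₀ hM]
  calc ((2 * π)⁻¹ - √n * (|b - 2 * √c| ^ n / (b + 2 * √c) ^ n)) * (b + 2 * √c) ^ n
      = ((b + 2 * √c) ^ n / √n - 2 * π * |b - 2 * √c| ^ n) * (√n / (2 * π)) := by
        field_simp
    _ ≤ T n b c * (2 * π) * (√n / (2 * π)) := by gcongr
    _ = √n * T n b c := by field_simp

theorem sqrt_mul_T_div_pow_le (hb : 0 ≤ b) (hc : 0 < c) (hn : n ≠ 0) :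
    √n * T n b c / (b + 2 * √c) ^ n ≤
      (2 * √(2 * (2 * √c) / (π ^ 2 * (b + 2 * √c))))⁻¹ +
        √n * (max b (2 * √c) / (b + 2 * √c)) ^ n := by
  have hM : 0 < (b + 2 * √c) ^ n := by positivity
  have hκ : 0 < 2 * (2 * √c) / (π ^ 2 * (b + 2 * √c)) := by positivity
  have h := integral_add_mul_cos_pow_le hb (by positivity : 0 < 2 * √c) hn
  rw [← T_mul_two_pi b hc, sqrt_mul hκ.le] at h
  rw [div_pow, div_le_iff₀ hM]
  calc √n * T n b c = T n b c * (2 * π) * (√n / (2 * π)) := by field_simp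
    _ ≤ ((b + 2 * √c) ^ n * (π / (√(2 * (2 * √c) / (π ^ 2 * (b + 2 * √c))) * √n)) +
          2 * π * max b (2 * √c) ^ n) * (√n / (2 * π)) := by gcongr
    _ = _ := by field_simp

end Normalized

theorem eventually_sqrt_mul_T_div_pow_mem_Icc {b c : ℝ} (hb : 0 < b) (hc : 0 < c) :
    ∃ δ C : ℝ, 0 < δ ∧
      ∀ᶠ n : ℕ in atTop, √n * T n b c / (b + 2 * √c) ^ n ∈ Set.Icc δ C := by
  have hA : 0 < 2 * √c := by positivity
  have hρ : |b - 2 * √c| / (b + 2 * √c) < 1 := by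
    rw [div_lt_one (by positivity), abs_sub_lt_iff]; constructor <;> linarith
  have hρ' : max b (2 * √c) / (b + 2 * √c) < 1 := by
    rw [div_lt_one (by positivity), max_lt_iff]; constructor <;> linarith
  refine ⟨(4 * π)⁻¹, (2 * √(2 * (2 * √c) / (π ^ 2 * (b + 2 * √c))))⁻¹ + 1,
    by positivity, ?_⟩
  filter_upwards [eventually_ne_atTop 0,
    (tendsto_sqrt_mul_pow_of_lt_one (by positivity) hρ).eventually
      (ge_mem_nhds (by positivity : (0 : ℝ) < (4 * π)⁻¹)),
    (tendsto_sqrt_mul_pow_of_lt_one (by positivity) hρ').eventually (ge_mem_nhds one_pos)]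
    with n hn hsmall hsmall'
  have hquarter : (2 * π)⁻¹ - (4 * π)⁻¹ = (4 * π)⁻¹ := by field_simp; ring
  exact ⟨by linarith [inv_two_pi_sub_le_sqrt_mul_T_div_pow hb.le hc hn],
    by linarith [sqrt_mul_T_div_pow_le hb.le hc hn]⟩

theorem stmt_19 (b c : ℝ) (hb : 0 < b) (hc : 0 < c) :
    0 < Filter.liminf (fun n : ℕ =>
        Real.sqrt n * T n b c / (b + 2 * Real.sqrt c) ^ n) atTop ∧
    Tendsto (fun n : ℕ => (T n b c) ^ ((1 : ℝ) / n)) atTop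
      (nhds (b + 2 * Real.sqrt c)) := by
  obtain ⟨δ, C, hδ, hbounds⟩ := eventually_sqrt_mul_T_div_pow_mem_Icc hb hc
  refine ⟨hδ.trans_le (le_liminf_of_le ?_ (hbounds.mono fun _ hn => hn.1)),
    tendsto_rpow_one_div_of_sqrt_mul_div_pow_mem_Icc (by positivity) hδ hbounds⟩
  exact isCoboundedUnder_ge_of_eventually_le atTop (hbounds.mono fun _ hn => hn.2)
end
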